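/- arXiv:2203.11416 — 5 statements merged into one kernel-verified Lean document; each statement's English description precedes it below -/
import Mathlib

section
/- A permutation is in Av(231, 321, 4123, 21534) if and only if it has the form π ⊕ σ ⊕ τ, where π is an increasing (possibly empty) permutation, σ is either empty or equal to 312, and τ avoids 231, 312, and 321. -/
open Finset MvPolynomial
open scoped Classical

/-- `π` contains the pattern given by the list `p` (one-line notation). -/
def ContainsPat {n : ℕ} (π : Equiv.Perm (Fin n)) (p : List ℕ) : Prop :=
  ∃ f : Fin p.length → Fin n, StrictMono f ∧
    ∀ i j : Fin p.length, p.get i < p.get j ↔ π (f i) < π (f j)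

/-- `π` avoids every pattern in the list `S`. -/
def AvoidsAll {n : ℕ} (π : Equiv.Perm (Fin n)) (S : List (List ℕ)) : Prop :=
  ∀ p ∈ S, ¬ ContainsPat π p

/-- Fibonacci numbers with the convention `F 0 = F 1 = 1`. -/
def fib' : ℕ → ℕ
  | 0 => 1
  | 1 => 1
  | n + 2 => fib' (n + 1) + fib' n

/-- number of inversions -/
def invNum {n : ℕ} (π : Equiv.Perm (Fin n)) : ℕ :=
  (Finset.univ.filter (fun p : Fin n × Fin n => p.1 < p.2 ∧ π p.2 < π p.1)).card

/-- The last `k` entries of `π` contain pattern `p`. -/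
def SegContainsPat {n : ℕ} (π : Equiv.Perm (Fin n)) (k : ℕ) (p : List ℕ) : Prop :=
  ∃ f : Fin p.length → Fin n, StrictMono f ∧ (∀ i, n - k ≤ ((f i : Fin n) : ℕ)) ∧
    ∀ i j : Fin p.length, p.get i < p.get j ↔ π (f i) < π (f j)

/-- The last `k` entries of `π` are the top `k` values and form a Fibonacci permutation. -/
def IsFinalFib {n : ℕ} (π : Equiv.Perm (Fin n)) (k : ℕ) : Prop :=
  k ≤ n ∧ (∀ i : Fin n, n - k ≤ (i : ℕ) → n - k ≤ ((π i : Fin n) : ℕ)) ∧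
    ∀ p ∈ [[2,3,1],[3,1,2],[3,2,1]], ¬ SegContainsPat π k p

/-- `Fib(π)`: length of the longest final segment of `π` consisting of the top values
and avoiding 231, 312, 321. -/
noncomputable def fibStat {n : ℕ} (π : Equiv.Perm (Fin n)) : ℕ := sSup {k | IsFinalFib π k}

/-- direct sum `π ⊕ σ` -/
def dsum {m n : ℕ} (π : Equiv.Perm (Fin m)) (σ : Equiv.Perm (Fin n)) :
    Equiv.Perm (Fin (m + n)) :=
  finSumFinEquiv.symm.trans ((Equiv.sumCongr π σ).trans finSumFinEquiv)

/-- skew sum `π ⊖ σ` -/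
def sskew {m n : ℕ} (π : Equiv.Perm (Fin m)) (σ : Equiv.Perm (Fin n)) :
    Equiv.Perm (Fin (m + n)) :=
  finSumFinEquiv.symm.trans ((Equiv.sumCongr π σ).trans
    ((Equiv.sumComm (Fin m) (Fin n)).trans (finSumFinEquiv.trans (finCongr (Nat.add_comm n m)))))

/-- the pattern 321 as a permutation of `Fin 3` -/
def perm321 : Equiv.Perm (Fin 3) := Fin.revPerm

/-- the pattern 312 as a permutation of `Fin 3` -/
def perm312 : Equiv.Perm (Fin 3) := (finRotate 3)⁻¹

/-- binomial coefficient on ℤ, zero when undefined -/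
def C (a b : ℤ) : ℤ := if 0 ≤ b ∧ b ≤ a then (a.toNat.choose b.toNat : ℤ) else 0

/-- generating function `G_n(v,q)` with `v = X 0`, `q = X 1` -/
noncomputable def G (n : ℕ) (S : List (List ℕ)) : MvPolynomial (Fin 2) ℤ :=
  ∑ π ∈ Finset.univ.filter (fun π : Equiv.Perm (Fin n) => AvoidsAll π S),
    X 0 ^ fibStat π * X 1 ^ invNum π

/-- Fibonacci generating function `F_n(q)` with `q = X 1` -/
noncomputable def Fq (n : ℕ) : MvPolynomial (Fin 2) ℤ :=
  ∑ π ∈ Finset.univ.filter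
      (fun π : Equiv.Perm (Fin n) => AvoidsAll π [[2,3,1],[3,1,2],[3,2,1]]),
    X 1 ^ invNum π

/- ======================= auxiliary lemmas ======================= -/

lemma perm_val_ne' {N : ℕ} (π : Equiv.Perm (Fin N)) {a b : Fin N} (h : (a:ℕ) ≠ (b:ℕ)) :
    (π a : ℕ) ≠ π b := by
  intro h'
  exact h (congrArg Fin.val (π.injective (Fin.ext h')))

lemma contains231_iff {n : ℕ} (π : Equiv.Perm (Fin n)) :
    ContainsPat π [2,3,1] ↔ ∃ i j k : Fin n, (i:ℕ) < j ∧ (j:ℕ) < k ∧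
      ((π k : ℕ) < π i ∧ (π i : ℕ) < π j) := by
  constructor
  · rintro ⟨f, hf, hiff⟩
    refine ⟨f ⟨0, by norm_num⟩, f ⟨1, by norm_num⟩, f ⟨2, by norm_num⟩,
      hf (by norm_num [Fin.lt_def]), hf (by norm_num [Fin.lt_def]),
      (hiff ⟨2, by norm_num⟩ ⟨0, by norm_num⟩).1 (by norm_num),
      (hiff ⟨0, by norm_num⟩ ⟨1, by norm_num⟩).1 (by norm_num)⟩
  · rintro ⟨i, j, k, hij, hjk, h1, h2⟩
    refine ⟨fun t => if (t:ℕ) = 0 then i else if (t:ℕ) = 1 then j else k, ?_, ?_⟩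
    · intro a b hab
      have hab' : (a:ℕ) < b := hab
      simp only [Fin.lt_def]
      rcases a with ⟨av, ha⟩; rcases b with ⟨bv, hb⟩
      have ha2 : av < 3 := ha; have hb2 : bv < 3 := hb
      simp only at hab' ⊢
      interval_cases av <;> interval_cases bv <;> simp <;> omega
    · intro a b
      rcases a with ⟨av, ha⟩; rcases b with ⟨bv, hb⟩
      have ha2 : av < 3 := ha; have hb2 : bv < 3 := hb
      simp only [Fin.lt_def]
      interval_cases av <;> interval_cases bv <;> simp [List.get] <;> omega

lemma contains312_iff {n : ℕ} (π : Equiv.Perm (Fin n)) :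
    ContainsPat π [3,1,2] ↔ ∃ i j k : Fin n, (i:ℕ) < j ∧ (j:ℕ) < k ∧
      ((π j : ℕ) < π k ∧ (π k : ℕ) < π i) := by
  constructor
  · rintro ⟨f, hf, hiff⟩
    refine ⟨f ⟨0, by norm_num⟩, f ⟨1, by norm_num⟩, f ⟨2, by norm_num⟩,
      hf (by norm_num [Fin.lt_def]), hf (by norm_num [Fin.lt_def]),
      (hiff ⟨1, by norm_num⟩ ⟨2, by norm_num⟩).1 (by norm_num),
      (hiff ⟨2, by norm_num⟩ ⟨0, by norm_num⟩).1 (by norm_num)⟩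
  · rintro ⟨i, j, k, hij, hjk, h1, h2⟩
    refine ⟨fun t => if (t:ℕ) = 0 then i else if (t:ℕ) = 1 then j else k, ?_, ?_⟩
    · intro a b hab
      have hab' : (a:ℕ) < b := hab
      simp only [Fin.lt_def]
      rcases a with ⟨av, ha⟩; rcases b with ⟨bv, hb⟩
      have ha2 : av < 3 := ha; have hb2 : bv < 3 := hb
      simp only at hab' ⊢
      interval_cases av <;> interval_cases bv <;> simp <;> omega
    · intro a b
      rcases a with ⟨av, ha⟩; rcases b with ⟨bv, hb⟩
      have ha2 : av < 3 := ha; have hb2 : bv < 3 := hb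
      simp only [Fin.lt_def]
      interval_cases av <;> interval_cases bv <;> simp [List.get] <;> omega

lemma contains321_iff {n : ℕ} (π : Equiv.Perm (Fin n)) :
    ContainsPat π [3,2,1] ↔ ∃ i j k : Fin n, (i:ℕ) < j ∧ (j:ℕ) < k ∧
      ((π k : ℕ) < π j ∧ (π j : ℕ) < π i) := by
  constructor
  · rintro ⟨f, hf, hiff⟩
    refine ⟨f ⟨0, by norm_num⟩, f ⟨1, by norm_num⟩, f ⟨2, by norm_num⟩,
      hf (by norm_num [Fin.lt_def]), hf (by norm_num [Fin.lt_def]),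
      (hiff ⟨2, by norm_num⟩ ⟨1, by norm_num⟩).1 (by norm_num),
      (hiff ⟨1, by norm_num⟩ ⟨0, by norm_num⟩).1 (by norm_num)⟩
  · rintro ⟨i, j, k, hij, hjk, h1, h2⟩
    refine ⟨fun t => if (t:ℕ) = 0 then i else if (t:ℕ) = 1 then j else k, ?_, ?_⟩
    · intro a b hab
      have hab' : (a:ℕ) < b := hab
      simp only [Fin.lt_def]
      rcases a with ⟨av, ha⟩; rcases b with ⟨bv, hb⟩
      have ha2 : av < 3 := ha; have hb2 : bv < 3 := hb
      simp only at hab' ⊢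
      interval_cases av <;> interval_cases bv <;> simp <;> omega
    · intro a b
      rcases a with ⟨av, ha⟩; rcases b with ⟨bv, hb⟩
      have ha2 : av < 3 := ha; have hb2 : bv < 3 := hb
      simp only [Fin.lt_def]
      interval_cases av <;> interval_cases bv <;> simp [List.get] <;> omega

lemma contains4123_iff {n : ℕ} (π : Equiv.Perm (Fin n)) :
    ContainsPat π [4,1,2,3] ↔ ∃ i j k l : Fin n, (i:ℕ) < j ∧ (j:ℕ) < k ∧ (k:ℕ) < l ∧
      ((π j : ℕ) < π k ∧ (π k : ℕ) < π l ∧ (π l : ℕ) < π i) := by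
  constructor
  · rintro ⟨f, hf, hiff⟩
    refine ⟨f ⟨0, by norm_num⟩, f ⟨1, by norm_num⟩, f ⟨2, by norm_num⟩, f ⟨3, by norm_num⟩,
      hf (by norm_num [Fin.lt_def]), hf (by norm_num [Fin.lt_def]), hf (by norm_num [Fin.lt_def]),
      (hiff ⟨1, by norm_num⟩ ⟨2, by norm_num⟩).1 (by norm_num),
      (hiff ⟨2, by norm_num⟩ ⟨3, by norm_num⟩).1 (by norm_num),
      (hiff ⟨3, by norm_num⟩ ⟨0, by norm_num⟩).1 (by norm_num)⟩
  · rintro ⟨i, j, k, l, hij, hjk, hkl, h1, h2, h3⟩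
    refine ⟨fun t => if (t:ℕ) = 0 then i else if (t:ℕ) = 1 then j else
      if (t:ℕ) = 2 then k else l, ?_, ?_⟩
    · intro a b hab
      have hab' : (a:ℕ) < b := hab
      simp only [Fin.lt_def]
      rcases a with ⟨av, ha⟩; rcases b with ⟨bv, hb⟩
      have ha2 : av < 4 := ha; have hb2 : bv < 4 := hb
      simp only at hab' ⊢
      interval_cases av <;> interval_cases bv <;> simp <;> omega
    · intro a b
      rcases a with ⟨av, ha⟩; rcases b with ⟨bv, hb⟩
      have ha2 : av < 4 := ha; have hb2 : bv < 4 := hb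
      simp only [Fin.lt_def]
      interval_cases av <;> interval_cases bv <;> simp [List.get] <;> omega

lemma contains21534_iff {n : ℕ} (π : Equiv.Perm (Fin n)) :
    ContainsPat π [2,1,5,3,4] ↔ ∃ p1 p2 p3 p4 p5 : Fin n,
      (p1:ℕ) < p2 ∧ (p2:ℕ) < p3 ∧ (p3:ℕ) < p4 ∧ (p4:ℕ) < p5 ∧
      ((π p2 : ℕ) < π p1 ∧ (π p1 : ℕ) < π p4 ∧ (π p4 : ℕ) < π p5 ∧ (π p5 : ℕ) < π p3) := by
  constructor
  · rintro ⟨f, hf, hiff⟩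
    refine ⟨f ⟨0, by norm_num⟩, f ⟨1, by norm_num⟩, f ⟨2, by norm_num⟩, f ⟨3, by norm_num⟩,
      f ⟨4, by norm_num⟩,
      hf (by norm_num [Fin.lt_def]), hf (by norm_num [Fin.lt_def]), hf (by norm_num [Fin.lt_def]),
      hf (by norm_num [Fin.lt_def]),
      (hiff ⟨1, by norm_num⟩ ⟨0, by norm_num⟩).1 (by norm_num),
      (hiff ⟨0, by norm_num⟩ ⟨3, by norm_num⟩).1 (by norm_num),
      (hiff ⟨3, by norm_num⟩ ⟨4, by norm_num⟩).1 (by norm_num),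
      (hiff ⟨4, by norm_num⟩ ⟨2, by norm_num⟩).1 (by norm_num)⟩
  · rintro ⟨p1, p2, p3, p4, p5, h12, h23, h34, h45, h1, h2, h3, h4⟩
    refine ⟨fun t => if (t:ℕ) = 0 then p1 else if (t:ℕ) = 1 then p2 else
      if (t:ℕ) = 2 then p3 else if (t:ℕ) = 3 then p4 else p5, ?_, ?_⟩
    · intro a b hab
      have hab' : (a:ℕ) < b := hab
      simp only [Fin.lt_def]
      rcases a with ⟨av, ha⟩; rcases b with ⟨bv, hb⟩
      have ha2 : av < 5 := ha; have hb2 : bv < 5 := hb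
      simp only at hab' ⊢
      interval_cases av <;> interval_cases bv <;> simp <;> omega
    · intro a b
      rcases a with ⟨av, ha⟩; rcases b with ⟨bv, hb⟩
      have ha2 : av < 5 := ha; have hb2 : bv < 5 := hb
      simp only [Fin.lt_def]
      interval_cases av <;> interval_cases bv <;> simp [List.get] <;> omega

/-- Fibonacci permutations have only adjacent inversions with adjacent values. -/
lemma adj_of_avoids {c : ℕ} (τ : Equiv.Perm (Fin c))
    (hav : AvoidsAll τ [[2,3,1],[3,1,2],[3,2,1]]) :
    ∀ i j : Fin c, (i:ℕ) < j → (τ j:ℕ) < τ i → (j:ℕ) = (i:ℕ)+1 ∧ (τ i:ℕ) = (τ j:ℕ) + 1 := by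
  have h231 : ¬ ContainsPat τ [2,3,1] := hav _ (by simp)
  have h312 : ¬ ContainsPat τ [3,1,2] := hav _ (by simp)
  have h321 : ¬ ContainsPat τ [3,2,1] := hav _ (by simp)
  rw [contains231_iff] at h231
  rw [contains312_iff] at h312
  rw [contains321_iff] at h321
  intro i j hij hinv
  have hadjpos : (j:ℕ) = (i:ℕ)+1 := by
    by_contra hne
    have hj : (i:ℕ)+1 < j := by omega
    have hm : (i:ℕ)+1 < c := lt_trans hj j.isLt
    set m : Fin c := ⟨(i:ℕ)+1, hm⟩ with hmdef
    have him : (i:ℕ) < (m:ℕ) := by simp [hmdef]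
    have hmj : (m:ℕ) < (j:ℕ) := hj
    have hne1 : (τ m:ℕ) ≠ τ i := perm_val_ne' τ (by omega)
    have hne2 : (τ m:ℕ) ≠ τ j := perm_val_ne' τ (by omega)
    rcases lt_trichotomy ((τ m:ℕ)) ((τ j:ℕ)) with h | h | h
    · exact h312 ⟨i, m, j, him, hmj, by omega, by omega⟩
    · omega
    · rcases lt_trichotomy ((τ m:ℕ)) ((τ i:ℕ)) with h' | h' | h'
      · exact h321 ⟨i, m, j, him, hmj, by omega, by omega⟩
      · omega
      · exact h231 ⟨i, m, j, him, hmj, by omega, by omega⟩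
  refine ⟨hadjpos, ?_⟩
  by_contra hval
  have hv : (τ j:ℕ)+1 < τ i := by omega
  have hvlt : (τ j:ℕ)+1 < c := lt_trans hv (τ i).isLt
  set v : Fin c := ⟨(τ j:ℕ)+1, hvlt⟩ with hvdef
  set p : Fin c := τ.symm v with hpdef
  have hpv : τ p = v := τ.apply_symm_apply v
  have hpvn : (τ p : ℕ) = (τ j:ℕ)+1 := by rw [hpv]
  have hpi : (p:ℕ) ≠ i := by
    intro h; rw [show p = i from Fin.ext h] at hpvn; omega
  have hpj : (p:ℕ) ≠ j := by
    intro h; rw [show p = j from Fin.ext h] at hpvn; omega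
  rcases lt_trichotomy ((p:ℕ)) ((i:ℕ)) with h | h | h
  · exact h231 ⟨p, i, j, h, hij, by omega, by omega⟩
  · omega
  · have : (j:ℕ) < p := by omega
    exact h312 ⟨i, j, p, hij, this, by omega, by omega⟩

lemma dsum_coe_lt {m n : ℕ} (π : Equiv.Perm (Fin m)) (σ : Equiv.Perm (Fin n))
    (x : Fin (m+n)) (h : (x:ℕ) < m) :
    ((dsum π σ) x : ℕ) = (π ⟨x, h⟩ : ℕ) := by
  revert h
  induction x using Fin.addCases with
  | left i =>
      intro h
      have h2 : (⟨((Fin.castAdd n i : Fin (m+n)) : ℕ), h⟩ : Fin m) = i := Fin.ext (by simp)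
      rw [h2, dsum]
      simp
  | right i =>
      intro h
      exfalso
      have hh : ((Fin.natAdd m i : Fin (m+n)) : ℕ) = m + i := rfl
      omega

lemma dsum_coe_ge {m n : ℕ} (π : Equiv.Perm (Fin m)) (σ : Equiv.Perm (Fin n))
    (x : Fin (m+n)) (h : m ≤ (x:ℕ)) :
    ((dsum π σ) x : ℕ) = m + (σ ⟨(x:ℕ) - m, by have := x.isLt; omega⟩ : ℕ) := by
  revert h
  induction x using Fin.addCases with
  | left i =>
      intro h
      exfalso
      have hh : ((Fin.castAdd n i : Fin (m+n)) : ℕ) = i := rfl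
      have := i.isLt
      omega
  | right i =>
      intro h
      have h2 : (⟨((Fin.natAdd m i : Fin (m+n)) : ℕ) - m, by have := (Fin.natAdd m i).isLt; omega⟩ : Fin n) = i :=
        Fin.ext (by simp)
      rw [h2, dsum]
      simp

lemma perm312_coe_0 : ((perm312 ⟨0, by norm_num⟩ : Fin 3) : ℕ) = 2 := by decide
lemma perm312_coe_1 : ((perm312 ⟨1, by norm_num⟩ : Fin 3) : ℕ) = 0 := by decide
lemma perm312_coe_2 : ((perm312 ⟨2, by norm_num⟩ : Fin 3) : ℕ) = 1 := by decide

lemma permCongr_coe {M N : ℕ} (h : M = N) (ρ : Equiv.Perm (Fin M)) (x : Fin N) :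
    (((finCongr h).permCongr ρ) x : ℕ) = (ρ ⟨(x:ℕ), h ▸ x.isLt⟩ : ℕ) := by
  subst h
  simp [Equiv.permCongr_apply]

/- ======================= pointwise descriptions ======================= -/

section PW
variable {a c N : ℕ}

lemma pw1_lt (h : a + c = N) (τ : Equiv.Perm (Fin c)) (x : Fin N) (hx : (x:ℕ) < a) :
    ((((finCongr h).permCongr (dsum (Equiv.refl (Fin a)) τ)) x : Fin N) : ℕ) = x := by
  rw [permCongr_coe]
  rw [dsum_coe_lt _ _ _ (by simpa using hx)]
  rfl

lemma pw1_ge (h : a + c = N) (τ : Equiv.Perm (Fin c)) (x : Fin N) (hx : a ≤ (x:ℕ)) :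
    ((((finCongr h).permCongr (dsum (Equiv.refl (Fin a)) τ)) x : Fin N) : ℕ) =
      a + (τ ⟨(x:ℕ) - a, by have := x.isLt; omega⟩ : ℕ) := by
  rw [permCongr_coe]
  rw [dsum_coe_ge _ _ _ (by simpa using hx)]

lemma pw2_lt (h : a + 3 + c = N) (τ : Equiv.Perm (Fin c)) (x : Fin N) (hx : (x:ℕ) < a) :
    ((((finCongr h).permCongr (dsum (dsum (Equiv.refl (Fin a)) perm312) τ)) x : Fin N) : ℕ) = x := by
  rw [permCongr_coe]
  rw [dsum_coe_lt _ _ _ (show ((⟨(x:ℕ), _⟩ : Fin (a+3+c)) : ℕ) < a + 3 by simp; omega)]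
  rw [dsum_coe_lt _ _ _ (by simpa using hx)]
  rfl

lemma pw2_block (h : a + 3 + c = N) (τ : Equiv.Perm (Fin c)) (x : Fin N)
    (hx : a ≤ (x:ℕ)) (hx2 : (x:ℕ) < a + 3) :
    ((((finCongr h).permCongr (dsum (dsum (Equiv.refl (Fin a)) perm312) τ)) x : Fin N) : ℕ) =
      a + (perm312 ⟨(x:ℕ) - a, by omega⟩ : ℕ) := by
  rw [permCongr_coe]
  rw [dsum_coe_lt _ _ _ (show ((⟨(x:ℕ), _⟩ : Fin (a+3+c)) : ℕ) < a + 3 by simpa using hx2)]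
  rw [dsum_coe_ge _ _ _ (by simpa using hx)]

lemma pw2_suf (h : a + 3 + c = N) (τ : Equiv.Perm (Fin c)) (x : Fin N) (hx : a + 3 ≤ (x:ℕ)) :
    ((((finCongr h).permCongr (dsum (dsum (Equiv.refl (Fin a)) perm312) τ)) x : Fin N) : ℕ) =
      a + 3 + (τ ⟨(x:ℕ) - (a+3), by have := x.isLt; omega⟩ : ℕ) := by
  rw [permCongr_coe]
  rw [dsum_coe_ge _ _ _ (show (a+3 : ℕ) ≤ ((⟨(x:ℕ), _⟩ : Fin (a+3+c)) : ℕ) by simpa using hx)]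

end PW

/- ======================= forward structural core ======================= -/

lemma caseB {N : ℕ} (P : Equiv.Perm (Fin N))
    (h231 : ∀ i j k : Fin N, (i:ℕ) < j → (j:ℕ) < k → ¬((P k:ℕ) < P i ∧ (P i:ℕ) < P j))
    (h321 : ∀ i j k : Fin N, (i:ℕ) < j → (j:ℕ) < k → ¬((P k:ℕ) < P j ∧ (P j:ℕ) < P i))
    (h4123 : ∀ i j k l : Fin N, (i:ℕ) < j → (j:ℕ) < k → (k:ℕ) < l →
      ¬((P j:ℕ) < P k ∧ (P k:ℕ) < P l ∧ (P l:ℕ) < P i))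
    (h21534 : ∀ p1 p2 p3 p4 p5 : Fin N, (p1:ℕ) < p2 → (p2:ℕ) < p3 → (p3:ℕ) < p4 → (p4:ℕ) < p5 →
      ¬((P p2:ℕ) < P p1 ∧ (P p1:ℕ) < P p4 ∧ (P p4:ℕ) < P p5 ∧ (P p5:ℕ) < P p3))
    (i0 j0 k0 : Fin N) (hij : (i0:ℕ) < j0) (hjk : (j0:ℕ) < k0)
    (o1 : (P j0:ℕ) < P k0) (o2 : (P k0:ℕ) < P i0) :
    ∃ a : ℕ, a + 3 ≤ N ∧ (∀ x : Fin N, (x:ℕ) < a → (P x:ℕ) = x) ∧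
      (∀ x : Fin N, (x:ℕ) = a → (P x:ℕ) = a+2) ∧
      (∀ x : Fin N, (x:ℕ) = a+1 → (P x:ℕ) = a) ∧
      (∀ x : Fin N, (x:ℕ) = a+2 → (P x:ℕ) = a+1) ∧
      (∀ x : Fin N, a+3 ≤ (x:ℕ) → a+3 ≤ (P x:ℕ)) := by
  have inv1 : ∀ i j p : Fin N, (i:ℕ) < j → (P j:ℕ) < P i → (p:ℕ) ≠ i → (p:ℕ) < j →
      (P p:ℕ) < P j := by
    intro i j p hij' hinv hpi hpj
    by_contra hge
    have hne : (P p:ℕ) ≠ P j := perm_val_ne' P (by omega)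
    have h1 : (P j:ℕ) < P p := by omega
    rcases lt_trichotomy ((p:ℕ)) ((i:ℕ)) with h | h | h
    · rcases lt_trichotomy ((P p:ℕ)) ((P i:ℕ)) with h' | h' | h'
      · exact h231 p i j h hij' ⟨by omega, by omega⟩
      · exact perm_val_ne' P (show (p:ℕ) ≠ i by omega) h'
      · exact h321 p i j h hij' ⟨by omega, by omega⟩
    · exact hpi h
    · rcases lt_trichotomy ((P p:ℕ)) ((P i:ℕ)) with h' | h' | h'
      · exact h321 i p j h hpj ⟨by omega, by omega⟩
      · exact perm_val_ne' P (show (p:ℕ) ≠ i by omega) h'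
      · exact h231 i p j h hpj ⟨by omega, by omega⟩
  have inv2 : ∀ q : Fin N, (j0:ℕ) < q → (P j0:ℕ) < P q := by
    intro q hq
    by_contra hge
    have hne : (P q:ℕ) ≠ P j0 := perm_val_ne' P (by omega)
    exact h321 i0 j0 q hij hq ⟨by omega, by omega⟩
  have mono : ∀ p q : Fin N, (p:ℕ) < q → (q:ℕ) < j0 → (p:ℕ) ≠ i0 → (q:ℕ) ≠ i0 →
      (P p:ℕ) < P q := by
    intro p q hpq hqj hpi hqi
    by_contra hge
    have hne : (P q:ℕ) ≠ P p := perm_val_ne' P (by omega)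
    have hinv : (P q:ℕ) < P p := by omega
    rcases lt_trichotomy ((q:ℕ)) ((i0:ℕ)) with h | h | h
    · have hPp : (P p:ℕ) < P j0 := inv1 i0 j0 p hij (by omega) (by omega) (by omega)
      exact h21534 p q i0 j0 k0 hpq h hij hjk ⟨hinv, by omega, by omega, by omega⟩
    · exact hqi h
    · have : (P i0:ℕ) < P q := inv1 p q i0 hpq hinv (by omega) h
      have hPp : (P p:ℕ) < P j0 := inv1 i0 j0 p hij (by omega) (by omega) (by omega)
      have : (P j0:ℕ) < P i0 := by omega
      omega
  have hj0 : (j0:ℕ) = (i0:ℕ) + 1 := by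
    by_contra hne
    have h2le : (i0:ℕ)+2 ≤ j0 := by omega
    have hm1 : (i0:ℕ)+1 < N := by have := j0.isLt; omega
    set m1 : Fin N := ⟨(i0:ℕ)+1, hm1⟩ with hm1def
    rcases Nat.lt_or_ge ((i0:ℕ)+2) ((j0:ℕ)) with h3 | h3
    · have hm2 : (i0:ℕ)+2 < N := by have := j0.isLt; omega
      set m2 : Fin N := ⟨(i0:ℕ)+2, hm2⟩ with hm2def
      have e1 : (P m1:ℕ) < P m2 := mono m1 m2 (by simp [hm1def, hm2def]) (by simp [hm2def]; omega)
        (by simp [hm1def]) (by simp [hm2def])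
      have e2 : (P m2:ℕ) < P j0 := inv1 i0 j0 m2 hij (by omega) (by simp [hm2def]) (by simp [hm2def]; omega)
      exact h4123 i0 m1 m2 j0 (by simp [hm1def]) (by simp [hm1def, hm2def]) (by simp [hm2def]; omega)
        ⟨e1, e2, by omega⟩
    · have e1 : (P m1:ℕ) < P j0 := inv1 i0 j0 m1 hij (by omega) (by simp [hm1def]) (by simp [hm1def]; omega)
      exact h4123 i0 m1 j0 k0 (by simp [hm1def]) (by simp [hm1def]; omega) hjk
        ⟨e1, by omega, by omega⟩
  set a : ℕ := (i0:ℕ) with hadef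
  have gap1 : ∀ m : Fin N, ¬((P j0:ℕ) < P m ∧ (P m:ℕ) < P k0) := by
    rintro m ⟨g1, g2⟩
    have hmj : (m:ℕ) ≠ j0 := by intro h; rw [show m = j0 from Fin.ext h] at g1; omega
    have hmk : (m:ℕ) ≠ k0 := by intro h; rw [show m = k0 from Fin.ext h] at g2; omega
    have hmi : (m:ℕ) ≠ i0 := by
      intro h; rw [show m = i0 from Fin.ext h] at g2; omega
    rcases lt_trichotomy ((m:ℕ)) ((j0:ℕ)) with h | h | h
    · have := inv1 i0 j0 m hij (by omega) hmi h; omega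
    · exact hmj h
    · rcases lt_trichotomy ((m:ℕ)) ((k0:ℕ)) with h' | h' | h'
      · exact h4123 i0 j0 m k0 hij h h' ⟨g1, g2, o2⟩
      · exact hmk h'
      · exact h321 i0 k0 m (by omega) h' ⟨g2, o2⟩
  have hPk0 : (P k0:ℕ) = (P j0:ℕ) + 1 := by
    by_contra hne
    have hv : (P j0:ℕ)+1 < N := by have := (P k0).isLt; omega
    set v : Fin N := ⟨(P j0:ℕ)+1, hv⟩ with hvdef
    have := gap1 (P.symm v)
    rw [P.apply_symm_apply] at this
    simp [hvdef] at this
    omega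
  have gap2 : ∀ m : Fin N, ¬((P k0:ℕ) < P m ∧ (P m:ℕ) < P i0) := by
    rintro m ⟨g1, g2⟩
    have hmj : (m:ℕ) ≠ j0 := by intro h; rw [show m = j0 from Fin.ext h] at g1; omega
    have hmk : (m:ℕ) ≠ k0 := by intro h; rw [show m = k0 from Fin.ext h] at g1; omega
    have hmi : (m:ℕ) ≠ i0 := by intro h; rw [show m = i0 from Fin.ext h] at g2; omega
    rcases lt_trichotomy ((m:ℕ)) ((j0:ℕ)) with h | h | h
    · have := inv1 i0 j0 m hij (by omega) hmi h; omega
    · exact hmj h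
    · rcases lt_trichotomy ((m:ℕ)) ((k0:ℕ)) with h' | h' | h'
      · exact h321 i0 m k0 (by omega) h' ⟨by omega, g2⟩
      · exact hmk h'
      · exact h4123 i0 j0 k0 m hij hjk h' ⟨o1, by omega, g2⟩
  have hPi0 : (P i0:ℕ) = (P j0:ℕ) + 2 := by
    by_contra hne
    have hv : (P j0:ℕ)+2 < N := by have := (P i0).isLt; omega
    set v : Fin N := ⟨(P j0:ℕ)+2, hv⟩ with hvdef
    have := gap2 (P.symm v)
    rw [P.apply_symm_apply] at this
    simp [hvdef] at this
    omega
  have hk0 : (k0:ℕ) = (j0:ℕ) + 1 := by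
    by_contra hne
    have hm : (j0:ℕ)+1 < N := by have := k0.isLt; omega
    set m : Fin N := ⟨(j0:ℕ)+1, hm⟩ with hmdef
    have hmv : (m:ℕ) = (j0:ℕ)+1 := by simp [hmdef]
    have h1 : (P j0:ℕ) < P m := inv2 m (by omega)
    have hne2 : (P m:ℕ) ≠ P k0 := perm_val_ne' P (by omega)
    have hne3 : (P m:ℕ) ≠ P i0 := perm_val_ne' P (by omega)
    have hg1 := gap1 m
    have hg2 := gap2 m
    have : (P i0:ℕ) < P m := by omega
    exact h231 i0 m k0 (by omega) (by omega) ⟨o2, this⟩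
  have hsuf : ∀ q : Fin N, a+3 ≤ (q:ℕ) → (P i0:ℕ) < P q := by
    intro q hq
    have h1 : (P j0:ℕ) < P q := inv2 q (by omega)
    have hne2 : (P q:ℕ) ≠ P k0 := perm_val_ne' P (by omega)
    have hne3 : (P q:ℕ) ≠ P i0 := perm_val_ne' P (by omega)
    have hg1 := gap1 q
    have hg2 := gap2 q
    omega
  have hsmall : ∀ v : ℕ, v < (P j0:ℕ) → ∀ hv : v < N, (P ⟨v, hv⟩ : ℕ) = v := by
    intro v
    induction v using Nat.strong_induction_on with
    | _ v IH =>
      intro hvsmall hv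
      set m : Fin N := P.symm ⟨v, hv⟩ with hmdef
      have hPm : (P m : ℕ) = v := by rw [hmdef, P.apply_symm_apply]
      have hmj : (m:ℕ) ≠ j0 := by
        intro h; rw [show m = j0 from Fin.ext h] at hPm; omega
      have hmi : (m:ℕ) ≠ i0 := by
        intro h; rw [show m = i0 from Fin.ext h] at hPm; omega
      have hmlt : (m:ℕ) < j0 := by
        by_contra hge
        have := inv2 m (by omega)
        omega
      have hmv : (m:ℕ) = v := by
        rcases lt_trichotomy ((m:ℕ)) v with h | h | h
        · have := IH (m:ℕ) h (by omega) m.isLt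
          have : (P m : ℕ) = m := by
            convert this using 2
          omega
        · exact h
        · exfalso
          have hvj : v < (j0:ℕ) := by omega
          have hvi : v ≠ (i0:ℕ) := by
            intro h'
            omega
          have hmono := mono ⟨v, hv⟩ m (by simpa using h) hmlt (by simpa using hvi) hmi
          rw [hPm] at hmono
          set w : ℕ := (P ⟨v, hv⟩ : ℕ) with hwdef
          have hIH := IH w (by omega) (by omega) (by omega : w < N)
          have : P ⟨w, by omega⟩ = P ⟨v, hv⟩ := Fin.ext (by rw [hIH])
          have := P.injective this
          have : w = v := congrArg Fin.val this
          omega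
      have hfin : (⟨v, hv⟩ : Fin N) = m := Fin.ext hmv.symm
      rw [hfin]; exact hPm
  have hPj0 : (P j0:ℕ) = a := by
    rcases lt_trichotomy ((P j0:ℕ)) a with h | h | h
    · exfalso
      have hvp : (P j0:ℕ) < N := (P j0).isLt
      have h1 : (P ⟨(P j0:ℕ), hvp⟩ : ℕ) < P j0 :=
        inv1 i0 j0 ⟨(P j0:ℕ), hvp⟩ hij (by omega) (by simp; omega) (by simp; omega)
      set w : ℕ := (P ⟨(P j0:ℕ), hvp⟩ : ℕ) with hwdef
      have hIH := hsmall w h1 (by omega : w < N)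
      have : P ⟨w, by omega⟩ = P ⟨(P j0:ℕ), hvp⟩ := Fin.ext (by rw [hIH])
      have := congrArg Fin.val (P.injective this)
      simp at this
      omega
    · exact h
    · exfalso
      have := hsmall a h i0.isLt
      have : P ⟨a, i0.isLt⟩ = P i0 := by
        congr 1
      omega
  exact ⟨a, by have := k0.isLt; omega,
    fun x hx => by
      have := hsmall (x:ℕ) (by omega) x.isLt
      rwa [show (⟨(x:ℕ), x.isLt⟩ : Fin N) = x from Fin.ext rfl] at this,
    fun x hx => by
      rw [show x = i0 from Fin.ext (by omega)]; omega,
    fun x hx => by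
      rw [show x = j0 from Fin.ext (by omega)]; omega,
    fun x hx => by
      rw [show x = k0 from Fin.ext (by omega)]; omega,
    fun x hx => by
      have := hsuf x hx; omega⟩

/- ======================= backward lemmas ======================= -/

lemma backward1 {a c N : ℕ} (h : a + c = N) (τ : Equiv.Perm (Fin c))
    (hτ : AvoidsAll τ [[2,3,1],[3,1,2],[3,2,1]]) :
    AvoidsAll ((finCongr h).permCongr (dsum (Equiv.refl (Fin a)) τ))
      [[2,3,1],[3,2,1],[4,1,2,3],[2,1,5,3,4]] := by
  set Q := (finCongr h).permCongr (dsum (Equiv.refl (Fin a)) τ) with hQ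
  have adj := adj_of_avoids τ hτ
  have invchar : ∀ i j : Fin N, (i:ℕ) < j → (Q j:ℕ) < Q i →
      (j:ℕ) = (i:ℕ)+1 ∧ (Q i:ℕ) = (Q j:ℕ)+1 := by
    intro i j hij hinv
    rcases Nat.lt_or_ge ((j:ℕ)) a with hj | hj
    · rw [pw1_lt h τ i (by omega), pw1_lt h τ j hj] at hinv; omega
    · rcases Nat.lt_or_ge ((i:ℕ)) a with hi | hi
      · exfalso
        rw [pw1_lt h τ i hi, pw1_ge h τ j hj] at hinv
        omega
      · have ei := pw1_ge h τ i hi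
        have ej := pw1_ge h τ j hj
        rw [ei, ej] at hinv
        have hic : (i:ℕ) - a < c := by have := i.isLt; omega
        have hjc : (j:ℕ) - a < c := by have := j.isLt; omega
        have hadj := adj ⟨(i:ℕ)-a, hic⟩ ⟨(j:ℕ)-a, hjc⟩ (by simp; omega) (by
          have e1 : (τ ⟨(i:ℕ)-a, by have := i.isLt; omega⟩ : ℕ) = τ ⟨(i:ℕ)-a, hic⟩ := rfl
          have e2 : (τ ⟨(j:ℕ)-a, by have := j.isLt; omega⟩ : ℕ) = τ ⟨(j:ℕ)-a, hjc⟩ := rfl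
          omega)
        simp at hadj
        rw [ei, ej]
        have e1 : (τ ⟨(i:ℕ)-a, by have := i.isLt; omega⟩ : ℕ) = τ ⟨(i:ℕ)-a, hic⟩ := rfl
        have e2 : (τ ⟨(j:ℕ)-a, by have := j.isLt; omega⟩ : ℕ) = τ ⟨(j:ℕ)-a, hjc⟩ := rfl
        omega
  intro p hp
  simp only [List.mem_cons, List.not_mem_nil, or_false] at hp
  rcases hp with rfl | rfl | rfl | rfl
  · rw [contains231_iff]
    rintro ⟨i, j, k, hij, hjk, c1, c2⟩
    have hc := invchar j k hjk (by omega)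
    omega
  · rw [contains321_iff]
    rintro ⟨i, j, k, hij, hjk, c1, c2⟩
    have hc := invchar i k (by omega) (by omega)
    omega
  · rw [contains4123_iff]
    rintro ⟨i, j, k, l, hij, hjk, hkl, c1, c2, c3⟩
    have hc := invchar i j hij (by omega)
    omega
  · rw [contains21534_iff]
    rintro ⟨p1, p2, p3, p4, p5, h12, h23, h34, h45, c1, c2, c3, c4⟩
    have hc := invchar p3 p4 h34 (by omega)
    omega

lemma backward2 {a c N : ℕ} (h : a + 3 + c = N) (τ : Equiv.Perm (Fin c))
    (hτ : AvoidsAll τ [[2,3,1],[3,1,2],[3,2,1]]) :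
    AvoidsAll ((finCongr h).permCongr (dsum (dsum (Equiv.refl (Fin a)) perm312) τ))
      [[2,3,1],[3,2,1],[4,1,2,3],[2,1,5,3,4]] := by
  set Q := (finCongr h).permCongr (dsum (dsum (Equiv.refl (Fin a)) perm312) τ) with hQ
  have adj := adj_of_avoids τ hτ
  have e1 : ∀ x : Fin N, (x:ℕ) < a → (Q x:ℕ) = x := fun x hx => pw2_lt h τ x hx
  have e2 : ∀ x : Fin N, (x:ℕ) = a → (Q x:ℕ) = a+2 := by
    intro x hx
    rw [pw2_block h τ x (by omega) (by omega)]
    have hmk : ∀ pf : (x:ℕ)-a < 3, (⟨(x:ℕ)-a, pf⟩ : Fin 3) = ⟨0, by norm_num⟩ :=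
      fun pf => Fin.ext (by simp [hx])
    rw [hmk, perm312_coe_0]
  have e3 : ∀ x : Fin N, (x:ℕ) = a+1 → (Q x:ℕ) = a := by
    intro x hx
    rw [pw2_block h τ x (by omega) (by omega)]
    have hmk : ∀ pf : (x:ℕ)-a < 3, (⟨(x:ℕ)-a, pf⟩ : Fin 3) = ⟨1, by norm_num⟩ :=
      fun pf => Fin.ext (by simp [hx])
    rw [hmk, perm312_coe_1]
    omega
  have e4 : ∀ x : Fin N, (x:ℕ) = a+2 → (Q x:ℕ) = a+1 := by
    intro x hx
    rw [pw2_block h τ x (by omega) (by omega)]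
    have hmk : ∀ pf : (x:ℕ)-a < 3, (⟨(x:ℕ)-a, pf⟩ : Fin 3) = ⟨2, by norm_num⟩ :=
      fun pf => Fin.ext (by simp [hx])
    rw [hmk, perm312_coe_2]
  have e5 : ∀ x : Fin N, a+3 ≤ (x:ℕ) → a+3 ≤ (Q x:ℕ) := by
    intro x hx
    rw [pw2_suf h τ x hx]
    omega
  have invchar : ∀ i j : Fin N, (i:ℕ) < j → (Q j:ℕ) < Q i →
      ((i:ℕ) = a ∧ (Q i:ℕ) = a+2 ∧
        (((j:ℕ) = a+1 ∧ (Q j:ℕ) = a) ∨ ((j:ℕ) = a+2 ∧ (Q j:ℕ) = a+1)))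
      ∨ (a+3 ≤ (i:ℕ) ∧ (j:ℕ) = (i:ℕ)+1 ∧ (Q i:ℕ) = (Q j:ℕ)+1) := by
    intro i j hij hinv
    rcases Nat.lt_or_ge ((j:ℕ)) a with hj | hj
    · rw [e1 i (by omega), e1 j hj] at hinv; omega
    · rcases Nat.lt_or_ge ((i:ℕ)) a with hi | hi
      · exfalso
        rw [e1 i hi] at hinv
        rcases Nat.lt_or_ge ((j:ℕ)) (a+3) with hj3 | hj3
        · have : (j:ℕ) = a ∨ (j:ℕ) = a+1 ∨ (j:ℕ) = a+2 := by omega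
          rcases this with h'|h'|h'
          · rw [e2 j h'] at hinv; omega
          · rw [e3 j h'] at hinv; omega
          · rw [e4 j h'] at hinv; omega
        · have := e5 j hj3; omega
      · rcases Nat.lt_or_ge ((i:ℕ)) (a+3) with hi3 | hi3
        · -- i in the block
          rcases Nat.lt_or_ge ((j:ℕ)) (a+3) with hj3 | hj3
          · have hi' : (i:ℕ) = a ∨ (i:ℕ) = a+1 ∨ (i:ℕ) = a+2 := by omega
            have hj' : (j:ℕ) = a ∨ (j:ℕ) = a+1 ∨ (j:ℕ) = a+2 := by omega
            rcases hi' with h'|h'|h' <;> rcases hj' with h''|h''|h''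
            · omega
            · exact Or.inl ⟨h', e2 i h', Or.inl ⟨h'', e3 j h''⟩⟩
            · exact Or.inl ⟨h', e2 i h', Or.inr ⟨h'', e4 j h''⟩⟩
            · omega
            · omega
            · exfalso; rw [e3 i h', e4 j h''] at hinv; omega
            · omega
            · omega
            · omega
          · exfalso
            have := e5 j hj3
            have hiv : (Q i:ℕ) ≤ a+2 := by
              have hi' : (i:ℕ) = a ∨ (i:ℕ) = a+1 ∨ (i:ℕ) = a+2 := by omega
              rcases hi' with h'|h'|h'
              · rw [e2 i h']
              · rw [e3 i h']; omega
              · rw [e4 i h']; omega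
            omega
        · -- both in suffix
          have hj3 : a+3 ≤ (j:ℕ) := by omega
          have ei := pw2_suf h τ i hi3
          have ej := pw2_suf h τ j hj3
          rw [ei, ej] at hinv
          have hic : (i:ℕ) - (a+3) < c := by have := i.isLt; omega
          have hjc : (j:ℕ) - (a+3) < c := by have := j.isLt; omega
          have et1 : (τ ⟨(i:ℕ)-(a+3), by have := i.isLt; omega⟩ : ℕ) = τ ⟨(i:ℕ)-(a+3), hic⟩ := rfl
          have et2 : (τ ⟨(j:ℕ)-(a+3), by have := j.isLt; omega⟩ : ℕ) = τ ⟨(j:ℕ)-(a+3), hjc⟩ := rfl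
          have hadj := adj ⟨(i:ℕ)-(a+3), hic⟩ ⟨(j:ℕ)-(a+3), hjc⟩ (by simp; omega) (by omega)
          simp at hadj
          right
          refine ⟨hi3, by omega, by rw [ei, ej]; omega⟩
  intro p hp
  simp only [List.mem_cons, List.not_mem_nil, or_false] at hp
  rcases hp with rfl | rfl | rfl | rfl
  · rw [contains231_iff]
    rintro ⟨i, j, k, hij, hjk, c1, c2⟩
    rcases invchar j k hjk (by omega) with ⟨hja, hQj, hk⟩ | ⟨_, _, hQ'⟩
    · -- j = a ; i < a so Q i = i < a
      have : (Q i:ℕ) = i := e1 i (by omega)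
      rcases hk with ⟨_, hQk⟩ | ⟨_, hQk⟩ <;> omega
    · omega
  · rw [contains321_iff]
    rintro ⟨i, j, k, hij, hjk, c1, c2⟩
    rcases invchar i k (by omega) (by omega) with ⟨hia, hQi, hk⟩ | ⟨_, hk1, _⟩
    · rcases hk with ⟨hk', hQk⟩ | ⟨hk', hQk⟩
      · omega
      · -- i = a, k = a+2, so j = a+1, Q j = a
        have : (Q j:ℕ) = a := e3 j (by omega)
        omega
    · omega
  · rw [contains4123_iff]
    rintro ⟨i, j, k, l, hij, hjk, hkl, c1, c2, c3⟩
    rcases invchar i l (by omega) (by omega) with ⟨hia, hQi, hl⟩ | ⟨_, hl1, _⟩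
    · rcases hl with ⟨hl', _⟩ | ⟨hl', _⟩ <;> omega
    · omega
  · rw [contains21534_iff]
    rintro ⟨p1, p2, p3, p4, p5, h12, h23, h34, h45, c1, c2, c3, c4⟩
    rcases invchar p3 p5 (by omega) (by omega) with ⟨h3a, hQ3, h5⟩ | ⟨_, h51, _⟩
    · rcases h5 with ⟨h5', hQ5⟩ | ⟨h5', hQ5⟩
      · omega
      · -- p3 = a, p5 = a+2, p4 = a+1 ; p1 < p2 < a
        have hp1 : (Q p1:ℕ) = p1 := e1 p1 (by omega)
        have hp2 : (Q p2:ℕ) = p2 := e1 p2 (by omega)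
        omega
    · omega

/- ======================= the theorem ======================= -/

theorem stmt6 (N : ℕ) (P : Equiv.Perm (Fin N)) :
    AvoidsAll P [[2,3,1],[3,2,1],[4,1,2,3],[2,1,5,3,4]] ↔
      ((∃ (a c : ℕ) (h : a + c = N) (τ : Equiv.Perm (Fin c)), AvoidsAll τ [[2,3,1],[3,1,2],[3,2,1]] ∧
          P = (finCongr h).permCongr (dsum (Equiv.refl (Fin a)) τ)) ∨
        (∃ (a c : ℕ) (h : a + 3 + c = N) (τ : Equiv.Perm (Fin c)), AvoidsAll τ [[2,3,1],[3,1,2],[3,2,1]] ∧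
          P = (finCongr h).permCongr (dsum (dsum (Equiv.refl (Fin a)) perm312) τ))) := by
  constructor
  · intro hav
    have h231' : ¬ ContainsPat P [2,3,1] := hav _ (by simp)
    have h321' : ¬ ContainsPat P [3,2,1] := hav _ (by simp)
    have h4123' : ¬ ContainsPat P [4,1,2,3] := hav _ (by simp)
    have h21534' : ¬ ContainsPat P [2,1,5,3,4] := hav _ (by simp)
    have h231 : ∀ i j k : Fin N, (i:ℕ) < j → (j:ℕ) < k → ¬((P k:ℕ) < P i ∧ (P i:ℕ) < P j) := by
      intro i j k hij hjk hc
      exact h231' ((contains231_iff P).2 ⟨i, j, k, hij, hjk, hc.1, hc.2⟩)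
    have h321 : ∀ i j k : Fin N, (i:ℕ) < j → (j:ℕ) < k → ¬((P k:ℕ) < P j ∧ (P j:ℕ) < P i) := by
      intro i j k hij hjk hc
      exact h321' ((contains321_iff P).2 ⟨i, j, k, hij, hjk, hc.1, hc.2⟩)
    have h4123 : ∀ i j k l : Fin N, (i:ℕ) < j → (j:ℕ) < k → (k:ℕ) < l →
        ¬((P j:ℕ) < P k ∧ (P k:ℕ) < P l ∧ (P l:ℕ) < P i) := by
      intro i j k l hij hjk hkl hc
      exact h4123' ((contains4123_iff P).2 ⟨i, j, k, l, hij, hjk, hkl, hc.1, hc.2.1, hc.2.2⟩)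
    have h21534 : ∀ p1 p2 p3 p4 p5 : Fin N, (p1:ℕ) < p2 → (p2:ℕ) < p3 → (p3:ℕ) < p4 →
        (p4:ℕ) < p5 →
        ¬((P p2:ℕ) < P p1 ∧ (P p1:ℕ) < P p4 ∧ (P p4:ℕ) < P p5 ∧ (P p5:ℕ) < P p3) := by
      intro p1 p2 p3 p4 p5 h12 h23 h34 h45 hc
      exact h21534' ((contains21534_iff P).2
        ⟨p1, p2, p3, p4, p5, h12, h23, h34, h45, hc.1, hc.2.1, hc.2.2.1, hc.2.2.2⟩)
    by_cases h312c : ∃ i j k : Fin N, (i:ℕ) < j ∧ (j:ℕ) < k ∧ (P j:ℕ) < P k ∧ (P k:ℕ) < P i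
    · -- case B : P contains 312
      right
      obtain ⟨i0, j0, k0, hij, hjk, o1, o2⟩ := h312c
      obtain ⟨a, hN, f1, f2, f3, f4, f5⟩ := caseB P h231 h321 h4123 h21534 i0 j0 k0 hij hjk o1 o2
      have hsum : a + 3 + (N - (a+3)) = N := by omega
      set c : ℕ := N - (a+3) with hcdef
      have hbound : ∀ y : Fin c, a+3+(y:ℕ) < N := fun y => by have := y.isLt; omega
      have hsym : ∀ x : Fin N, a+3 ≤ (x:ℕ) → a+3 ≤ ((P.symm x : Fin N):ℕ) := by
        intro x hx
        by_contra hlt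
        push_neg at hlt
        set y := P.symm x with hy
        have hxy : P y = x := P.apply_symm_apply x
        have hPy : (P y:ℕ) < a+3 := by
          rcases Nat.lt_or_ge ((y:ℕ)) a with h' | h'
          · have := f1 y h'; omega
          · have h5 : (y:ℕ) = a ∨ (y:ℕ) = a+1 ∨ (y:ℕ) = a+2 := by omega
            rcases h5 with h'|h'|h'
            · have := f2 y h'; omega
            · have := f3 y h'; omega
            · have := f4 y h'; omega
        rw [hxy] at hPy
        omega
      have hginj : Function.Injective (fun y : Fin c =>
          (⟨(P ⟨a+3+(y:ℕ), hbound y⟩ : ℕ) - (a+3), by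
            have h5 := f5 ⟨a+3+(y:ℕ), hbound y⟩ (by simp)
            have := (P ⟨a+3+(y:ℕ), hbound y⟩).isLt
            omega⟩ : Fin c)) := by
        intro y1 y2 hy
        have h51 := f5 ⟨a+3+(y1:ℕ), hbound y1⟩ (by simp)
        have h52 := f5 ⟨a+3+(y2:ℕ), hbound y2⟩ (by simp)
        have hv : ((⟨(P ⟨a+3+(y1:ℕ), hbound y1⟩ : ℕ) - (a+3), by
            have := (P ⟨a+3+(y1:ℕ), hbound y1⟩).isLt; omega⟩ : Fin c) : ℕ) =
            ((⟨(P ⟨a+3+(y2:ℕ), hbound y2⟩ : ℕ) - (a+3), by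
            have := (P ⟨a+3+(y2:ℕ), hbound y2⟩).isLt; omega⟩ : Fin c) : ℕ) :=
          congrArg Fin.val hy
        simp at hv
        have : (P ⟨a+3+(y1:ℕ), hbound y1⟩ : ℕ) = (P ⟨a+3+(y2:ℕ), hbound y2⟩ : ℕ) := by omega
        have := P.injective (Fin.ext this)
        have : a+3+(y1:ℕ) = a+3+(y2:ℕ) := congrArg Fin.val this
        exact Fin.ext (by omega)
      set τ : Equiv.Perm (Fin c) :=
        Equiv.ofBijective _ (Finite.injective_iff_bijective.mp hginj) with hτdef
      have hτval : ∀ y : Fin c, (τ y : ℕ) = (P ⟨a+3+(y:ℕ), hbound y⟩ : ℕ) - (a+3) :=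
        fun y => rfl
      have hτge : ∀ y : Fin c, a + 3 ≤ (P ⟨a+3+(y:ℕ), hbound y⟩ : ℕ) :=
        fun y => f5 _ (by simp)
      refine ⟨a, c, hsum, τ, ?_, ?_⟩
      · -- τ avoids 231, 312, 321
        intro p hp
        simp only [List.mem_cons, List.not_mem_nil, or_false] at hp
        rcases hp with rfl | rfl | rfl
        · rw [contains231_iff]
          rintro ⟨i, j, k, hij', hjk', c1, c2⟩
          have vi := hτval i; have vj := hτval j; have vk := hτval k
          have gi := hτge i; have gj := hτge j; have gk := hτge k
          exact h231 ⟨a+3+(i:ℕ), hbound i⟩ ⟨a+3+(j:ℕ), hbound j⟩ ⟨a+3+(k:ℕ), hbound k⟩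
            (by simp; omega) (by simp; omega) ⟨by omega, by omega⟩
        · rw [contains312_iff]
          rintro ⟨i, j, k, hij', hjk', c1, c2⟩
          have vi := hτval i; have vj := hτval j; have vk := hτval k
          have gi := hτge i; have gj := hτge j; have gk := hτge k
          have ha1 : (a:ℕ) < N := by omega
          have ha2 : (a+1:ℕ) < N := by omega
          have v1 := f2 ⟨a, ha1⟩ (by simp)
          have v2 := f3 ⟨a+1, ha2⟩ (by simp)
          exact h21534 ⟨a, ha1⟩ ⟨a+1, ha2⟩ ⟨a+3+(i:ℕ), hbound i⟩ ⟨a+3+(j:ℕ), hbound j⟩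
            ⟨a+3+(k:ℕ), hbound k⟩ (by simp) (by simp; omega) (by simp; omega) (by simp; omega)
            ⟨by omega, by omega, by omega, by omega⟩
        · rw [contains321_iff]
          rintro ⟨i, j, k, hij', hjk', c1, c2⟩
          have vi := hτval i; have vj := hτval j; have vk := hτval k
          have gi := hτge i; have gj := hτge j; have gk := hτge k
          exact h321 ⟨a+3+(i:ℕ), hbound i⟩ ⟨a+3+(j:ℕ), hbound j⟩ ⟨a+3+(k:ℕ), hbound k⟩
            (by simp; omega) (by simp; omega) ⟨by omega, by omega⟩
      · -- the equality
        apply Equiv.ext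
        intro x
        apply Fin.ext
        rcases Nat.lt_or_ge ((x:ℕ)) a with hx | hx
        · rw [pw2_lt hsum τ x hx]
          exact f1 x hx
        · rcases Nat.lt_or_ge ((x:ℕ)) (a+3) with hx3 | hx3
          · have hx' : (x:ℕ) = a ∨ (x:ℕ) = a+1 ∨ (x:ℕ) = a+2 := by omega
            rcases hx' with h'|h'|h'
            · rw [pw2_block hsum τ x (by omega) (by omega)]
              have hmk : ∀ pf : (x:ℕ)-a < 3, (⟨(x:ℕ)-a, pf⟩ : Fin 3) = ⟨0, by norm_num⟩ :=
                fun pf => Fin.ext (by simp [h'])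
              rw [hmk, perm312_coe_0, f2 x h']
            · rw [pw2_block hsum τ x (by omega) (by omega)]
              have hmk : ∀ pf : (x:ℕ)-a < 3, (⟨(x:ℕ)-a, pf⟩ : Fin 3) = ⟨1, by norm_num⟩ :=
                fun pf => Fin.ext (by simp [h'])
              rw [hmk, perm312_coe_1, f3 x h']
              omega
            · rw [pw2_block hsum τ x (by omega) (by omega)]
              have hmk : ∀ pf : (x:ℕ)-a < 3, (⟨(x:ℕ)-a, pf⟩ : Fin 3) = ⟨2, by norm_num⟩ :=
                fun pf => Fin.ext (by simp [h'])
              rw [hmk, perm312_coe_2, f4 x h']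
          · rw [pw2_suf hsum τ x hx3]
            have hxc : (x:ℕ) - (a+3) < c := by have := x.isLt; omega
            have et : (τ ⟨(x:ℕ)-(a+3), by have := x.isLt; omega⟩ : ℕ) = τ ⟨(x:ℕ)-(a+3), hxc⟩ := rfl
            have hv := hτval ⟨(x:ℕ)-(a+3), hxc⟩
            have hmk2 : (⟨a+3+((⟨(x:ℕ)-(a+3), hxc⟩ : Fin c):ℕ), hbound _⟩ : Fin N) = x :=
              Fin.ext (by simp; omega)
            rw [hmk2] at hv
            have hge := f5 x hx3
            omega
    · -- case A : P avoids 312 as well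
      left
      push_neg at h312c
      refine ⟨0, N, Nat.zero_add N, P, ?_, ?_⟩
      · intro p hp
        simp only [List.mem_cons, List.not_mem_nil, or_false] at hp
        rcases hp with rfl | rfl | rfl
        · exact h231'
        · rw [contains312_iff]
          rintro ⟨i, j, k, hij, hjk, c1, c2⟩
          have := h312c i j k hij hjk c1; omega
        · exact h321'
      · apply Equiv.ext
        intro x
        apply Fin.ext
        rw [pw1_ge (Nat.zero_add N) P x (Nat.zero_le _)]
        have hmk : ∀ pf : (x:ℕ) - 0 < N, (⟨(x:ℕ)-0, pf⟩ : Fin N) = x :=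
          fun pf => Fin.ext (by simp)
        rw [hmk]
        omega
  · rintro (⟨a, c, h, τ, hτ, hPeq⟩ | ⟨a, c, h, τ, hτ, hPeq⟩)
    · rw [hPeq]; exact backward1 h τ hτ
    · rw [hPeq]; exact backward2 h τ hτ
end

section
/- A permutation is in Av(231, 312, 1432) if and only if it has the form α ⊕ σ, where α is a decreasing (possibly empty) permutation and σ avoids 231, 312, and 321. -/
open Finset MvPolynomial
open scoped Classical

set_option maxRecDepth 100000

namespace Stmt7Aux

lemma dsum_castAdd {m n : ℕ} (π : Equiv.Perm (Fin m)) (σ : Equiv.Perm (Fin n)) (i : Fin m) :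
    dsum π σ (Fin.castAdd n i) = Fin.castAdd n (π i) := by simp [dsum]

lemma dsum_natAdd {m n : ℕ} (π : Equiv.Perm (Fin m)) (σ : Equiv.Perm (Fin n)) (j : Fin n) :
    dsum π σ (Fin.natAdd m j) = Fin.natAdd m (σ j) := by simp [dsum]

lemma contains231 {N : ℕ} (P : Equiv.Perm (Fin N)) {x y z : Fin N} (h1 : x < y) (h2 : y < z)
    (v1 : P z < P x) (v2 : P x < P y) : ContainsPat P [2,3,1] := by
  refine ⟨![x,y,z], ?_, ?_⟩
  · intro i j hij
    fin_cases i <;> fin_cases j <;>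
      first
        | exact absurd hij (by decide)
        | simpa using h1
        | simpa using h2
        | simpa using h1.trans h2
  · intro i j
    fin_cases i <;> fin_cases j <;>
      first
        | exact iff_of_true (by decide) v1
        | exact iff_of_true (by decide) v2
        | exact iff_of_true (by decide) (v1.trans v2)
        | exact iff_of_false (by decide) (lt_irrefl _)
        | exact iff_of_false (by decide) (asymm v1)
        | exact iff_of_false (by decide) (asymm v2)
        | exact iff_of_false (by decide) (asymm (v1.trans v2))

/-- pattern 312: positions x<y<z, values P y < P z < P x -/
lemma contains312 {N : ℕ} (P : Equiv.Perm (Fin N)) {x y z : Fin N} (h1 : x < y) (h2 : y < z)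
    (v1 : P y < P z) (v2 : P z < P x) : ContainsPat P [3,1,2] := by
  refine ⟨![x,y,z], ?_, ?_⟩
  · intro i j hij
    fin_cases i <;> fin_cases j <;>
      first
        | exact absurd hij (by decide)
        | simpa using h1
        | simpa using h2
        | simpa using h1.trans h2
  · intro i j
    fin_cases i <;> fin_cases j <;>
      first
        | exact iff_of_true (by decide) v1
        | exact iff_of_true (by decide) v2
        | exact iff_of_true (by decide) (v1.trans v2)
        | exact iff_of_false (by decide) (lt_irrefl _)
        | exact iff_of_false (by decide) (asymm v1)
        | exact iff_of_false (by decide) (asymm v2)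
        | exact iff_of_false (by decide) (asymm (v1.trans v2))

/-- pattern 1432: positions x<y<z<w, values P x < P w < P z < P y -/
lemma contains1432 {N : ℕ} (P : Equiv.Perm (Fin N)) {x y z w : Fin N}
    (h1 : x < y) (h2 : y < z) (h3 : z < w)
    (v1 : P x < P w) (v2 : P w < P z) (v3 : P z < P y) : ContainsPat P [1,4,3,2] := by
  refine ⟨![x,y,z,w], ?_, ?_⟩
  · intro i j hij
    fin_cases i <;> fin_cases j <;>
      first
        | exact absurd hij (by decide)
        | simpa using h1
        | simpa using h2
        | simpa using h3
        | simpa using h1.trans h2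
        | simpa using h2.trans h3
        | simpa using (h1.trans h2).trans h3
  · intro i j
    fin_cases i <;> fin_cases j <;>
      first
        | exact iff_of_true (by decide) v1
        | exact iff_of_true (by decide) v2
        | exact iff_of_true (by decide) v3
        | exact iff_of_true (by decide) (v1.trans v2)
        | exact iff_of_true (by decide) (v2.trans v3)
        | exact iff_of_true (by decide) ((v1.trans v2).trans v3)
        | exact iff_of_false (by decide) (lt_irrefl _)
        | exact iff_of_false (by decide) (asymm v1)
        | exact iff_of_false (by decide) (asymm v2)
        | exact iff_of_false (by decide) (asymm v3)
        | exact iff_of_false (by decide) (asymm (v1.trans v2))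
        | exact iff_of_false (by decide) (asymm (v2.trans v3))
        | exact iff_of_false (by decide) (asymm ((v1.trans v2).trans v3))

/-- pattern 321: positions x<y<z, values P z < P y < P x -/
lemma contains321 {N : ℕ} (P : Equiv.Perm (Fin N)) {x y z : Fin N} (h1 : x < y) (h2 : y < z)
    (v1 : P y < P x) (v2 : P z < P y) : ContainsPat P [3,2,1] := by
  refine ⟨![x,y,z], ?_, ?_⟩
  · intro i j hij
    fin_cases i <;> fin_cases j <;>
      first
        | exact absurd hij (by decide)
        | simpa using h1
        | simpa using h2
        | simpa using h1.trans h2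
  · intro i j
    fin_cases i <;> fin_cases j <;>
      first
        | exact iff_of_true (by decide) v1
        | exact iff_of_true (by decide) v2
        | exact iff_of_true (by decide) (v2.trans v1)
        | exact iff_of_false (by decide) (lt_irrefl _)
        | exact iff_of_false (by decide) (asymm v1)
        | exact iff_of_false (by decide) (asymm v2)
        | exact iff_of_false (by decide) (asymm (v2.trans v1))

lemma lift_pat {N c a : ℕ} (P : Equiv.Perm (Fin N)) (σ : Equiv.Perm (Fin c))
    (hac : a + c = N)
    (VR : ∀ j : Fin c, (P ⟨a + (j : ℕ), by omega⟩ : ℕ) = a + (σ j : ℕ))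
    (q : List ℕ) (h : ContainsPat σ q) : ContainsPat P q := by
  obtain ⟨g, hg, hcmp⟩ := h
  refine ⟨fun i => ⟨a + (g i : ℕ), by have := (g i).isLt; omega⟩, ?_, ?_⟩
  · intro i j hij
    have := hg hij
    simp only [Fin.lt_def] at this ⊢
    omega
  · intro i j
    rw [hcmp i j]
    simp only [Fin.lt_def, VR]
    omega

lemma restrict_pat {N c a : ℕ} (P : Equiv.Perm (Fin N)) (σ : Equiv.Perm (Fin c))
    (hac : a + c = N)
    (VR : ∀ j : Fin c, (P ⟨a + (j : ℕ), by omega⟩ : ℕ) = a + (σ j : ℕ))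
    (q : List ℕ) (f : Fin q.length → Fin N) (hf : StrictMono f)
    (hge : ∀ i, a ≤ (f i : ℕ))
    (hcmp : ∀ i j, q.get i < q.get j ↔ P (f i) < P (f j)) : ContainsPat σ q := by
  have hb : ∀ i, (f i : ℕ) - a < c := fun i => by have := (f i).isLt; have := hge i; omega
  set g : Fin q.length → Fin c := fun i => ⟨(f i : ℕ) - a, hb i⟩ with hgdef
  have hv : ∀ i, (P (f i) : ℕ) = a + (σ (g i) : ℕ) := by
    intro i
    have e : (⟨a + ((g i : ℕ)), by have := (g i).isLt; omega⟩ : Fin N) = f i :=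
      Fin.ext (by show a + ((f i : ℕ) - a) = (f i : ℕ); have := hge i; omega)
    calc (P (f i) : ℕ) = (P ⟨a + ((g i : ℕ)), by have := (g i).isLt; omega⟩ : ℕ) := by
          exact congrArg (fun t => ((P t : Fin N) : ℕ)) e.symm
      _ = a + (σ (g i) : ℕ) := VR (g i)
  refine ⟨g, ?_, ?_⟩
  · intro i j hij
    have := hf hij
    rw [Fin.lt_def] at this
    show ((f i : ℕ) - a : ℕ) < (f j : ℕ) - a
    have := hge i
    omega
  · intro i j
    rw [hcmp i j]
    simp only [Fin.lt_def]
    have hi := hv i; have hj := hv j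
    omega

end Stmt7Aux

namespace Stmt7Aux

section Bwd
variable {N a c : ℕ} (hac : a + c = N) (σ : Equiv.Perm (Fin c))

lemma VL (x : Fin N) (hx : (x : ℕ) < a) :
    (((finCongr hac).permCongr (dsum (Fin.revPerm : Equiv.Perm (Fin a)) σ)) x : ℕ)
      = a - 1 - (x : ℕ) := by
  have e1 : (finCongr hac).symm x = Fin.castAdd c ⟨(x : ℕ), hx⟩ := Fin.ext (by simp)
  rw [Equiv.permCongr_apply, e1, dsum_castAdd]
  simp [Fin.rev]
  omega

lemma VR (j : Fin c) :
    (((finCongr hac).permCongr (dsum (Fin.revPerm : Equiv.Perm (Fin a)) σ))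
        ⟨a + (j : ℕ), by omega⟩ : ℕ) = a + (σ j : ℕ) := by
  have e1 : (finCongr hac).symm ⟨a + (j : ℕ), by omega⟩ = Fin.natAdd a j := Fin.ext (by simp)
  rw [Equiv.permCongr_apply, e1, dsum_natAdd]
  simp

lemma VG (x : Fin N) (hx : a ≤ (x : ℕ)) :
    a ≤ (((finCongr hac).permCongr (dsum (Fin.revPerm : Equiv.Perm (Fin a)) σ)) x : ℕ) := by
  have hb : (x : ℕ) - a < c := by have := x.isLt; omega
  have e : (⟨a + ((⟨(x : ℕ) - a, hb⟩ : Fin c) : ℕ), by have := x.isLt; simp; omega⟩ : Fin N) = x :=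
    Fin.ext (by simp; omega)
  have := VR hac σ ⟨(x : ℕ) - a, hb⟩
  rw [e] at this
  omega

lemma val_tail (P : Equiv.Perm (Fin N))
    (VR : ∀ j : Fin c, (P ⟨a + (j : ℕ), by omega⟩ : ℕ) = a + (σ j : ℕ))
    (x : Fin N) (hx : a ≤ (x : ℕ)) :
    (P x : ℕ) = a + (σ ⟨(x : ℕ) - a, by have := x.isLt; omega⟩ : ℕ) := by
  have hb : (x : ℕ) - a < c := by have := x.isLt; omega
  have e : (⟨a + (((⟨(x : ℕ) - a, hb⟩ : Fin c)) : ℕ), by have := x.isLt; simp; omega⟩ : Fin N) = x :=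
    Fin.ext (by simp; omega)
  calc (P x : ℕ) = (P ⟨a + (((⟨(x : ℕ) - a, hb⟩ : Fin c)) : ℕ), by have := x.isLt; simp; omega⟩ : ℕ) := by
        exact congrArg (fun t => ((P t : Fin N) : ℕ)) e.symm
    _ = _ := VR _

lemma bwd (P : Equiv.Perm (Fin N))
    (hP : P = (finCongr hac).permCongr (dsum (Fin.revPerm : Equiv.Perm (Fin a)) σ))
    (hσ : AvoidsAll σ [[2,3,1],[3,1,2],[3,2,1]]) :
    AvoidsAll P [[2,3,1],[3,1,2],[1,4,3,2]] := by
  have hVL : ∀ x : Fin N, (x : ℕ) < a → (P x : ℕ) = a - 1 - (x : ℕ) := fun x hx => by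
    rw [hP]; exact VL hac σ x hx
  have hVR : ∀ j : Fin c, (P ⟨a + (j : ℕ), by omega⟩ : ℕ) = a + (σ j : ℕ) := fun j => by
    rw [hP]; exact VR hac σ j
  have hVG : ∀ x : Fin N, a ≤ (x : ℕ) → a ≤ (P x : ℕ) := fun x hx => by
    rw [hP]; exact VG hac σ x hx
  intro p hp
  simp only [List.mem_cons, List.not_mem_nil, or_false] at hp
  rcases hp with rfl | rfl | rfl
  · rintro ⟨f, hsm, hc⟩
    have hf01 : f ⟨0, by decide⟩ < f ⟨1, by decide⟩ := hsm (by decide)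
    have hf12 : f ⟨1, by decide⟩ < f ⟨2, by decide⟩ := hsm (by decide)
    have hv01 : P (f ⟨0, by decide⟩) < P (f ⟨1, by decide⟩) := (hc _ _).mp (by decide)
    have hv20 : P (f ⟨2, by decide⟩) < P (f ⟨0, by decide⟩) := (hc _ _).mp (by decide)
    rw [Fin.lt_def] at hf01 hf12 hv01 hv20
    have g1 : a ≤ (f ⟨1, by decide⟩ : ℕ) := by
      by_contra hlt
      push_neg at hlt
      have e1 := hVL (f ⟨0, by decide⟩) (by omega)
      have e2 := hVL (f ⟨1, by decide⟩) hlt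
      omega
    have g2 : a ≤ (f ⟨2, by decide⟩ : ℕ) := by omega
    have g0 : a ≤ (f ⟨0, by decide⟩ : ℕ) := by
      by_contra hlt
      push_neg at hlt
      have e1 := hVL (f ⟨0, by decide⟩) hlt
      have e2 := hVG (f ⟨2, by decide⟩) g2
      omega
    have hge : ∀ i, a ≤ (f i : ℕ) := by
      intro i; fin_cases i <;> assumption
    exact hσ [2,3,1] (by simp) (restrict_pat P σ hac hVR [2,3,1] f hsm hge hc)
  · rintro ⟨f, hsm, hc⟩
    have hf01 : f ⟨0, by decide⟩ < f ⟨1, by decide⟩ := hsm (by decide)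
    have hf12 : f ⟨1, by decide⟩ < f ⟨2, by decide⟩ := hsm (by decide)
    have hv10 : P (f ⟨1, by decide⟩) < P (f ⟨0, by decide⟩) := (hc _ _).mp (by decide)
    have hv12 : P (f ⟨1, by decide⟩) < P (f ⟨2, by decide⟩) := (hc _ _).mp (by decide)
    have hv20 : P (f ⟨2, by decide⟩) < P (f ⟨0, by decide⟩) := (hc _ _).mp (by decide)
    rw [Fin.lt_def] at hf01 hf12 hv10 hv12 hv20
    have g1 : a ≤ (f ⟨1, by decide⟩ : ℕ) := by
      by_contra hlt
      push_neg at hlt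
      rcases lt_or_ge ((f ⟨2, by decide⟩ : Fin N) : ℕ) a with hlt2 | hge2
      · have e1 := hVL (f ⟨1, by decide⟩) hlt
        have e2 := hVL (f ⟨2, by decide⟩) hlt2
        omega
      · have e1 := hVL (f ⟨0, by decide⟩) (by omega)
        have e2 := hVG (f ⟨2, by decide⟩) hge2
        omega
    have g2 : a ≤ (f ⟨2, by decide⟩ : ℕ) := by omega
    have g0 : a ≤ (f ⟨0, by decide⟩ : ℕ) := by
      by_contra hlt
      push_neg at hlt
      have e1 := hVL (f ⟨0, by decide⟩) hlt
      have e2 := hVG (f ⟨2, by decide⟩) g2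
      omega
    have hge : ∀ i, a ≤ (f i : ℕ) := by
      intro i; fin_cases i <;> assumption
    exact hσ [3,1,2] (by simp) (restrict_pat P σ hac hVR [3,1,2] f hsm hge hc)
  · rintro ⟨f, hsm, hc⟩
    have hf01 : f ⟨0, by decide⟩ < f ⟨1, by decide⟩ := hsm (by decide)
    have hf12 : f ⟨1, by decide⟩ < f ⟨2, by decide⟩ := hsm (by decide)
    have hf23 : f ⟨2, by decide⟩ < f ⟨3, by decide⟩ := hsm (by decide)
    have hv01 : P (f ⟨0, by decide⟩) < P (f ⟨1, by decide⟩) := (hc _ _).mp (by decide)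
    have hv21 : P (f ⟨2, by decide⟩) < P (f ⟨1, by decide⟩) := (hc _ _).mp (by decide)
    have hv32 : P (f ⟨3, by decide⟩) < P (f ⟨2, by decide⟩) := (hc _ _).mp (by decide)
    rw [Fin.lt_def] at hf01 hf12 hf23 hv01 hv21 hv32
    have g1 : a ≤ (f ⟨1, by decide⟩ : ℕ) := by
      by_contra hlt
      push_neg at hlt
      have e1 := hVL (f ⟨0, by decide⟩) (by omega)
      have e2 := hVL (f ⟨1, by decide⟩) hlt
      omega
    have g2 : a ≤ (f ⟨2, by decide⟩ : ℕ) := by omega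
    have g3 : a ≤ (f ⟨3, by decide⟩ : ℕ) := by omega
    have k1 := val_tail hac σ P hVR (f ⟨1, by decide⟩) g1
    have k2 := val_tail hac σ P hVR (f ⟨2, by decide⟩) g2
    have k3 := val_tail hac σ P hVR (f ⟨3, by decide⟩) g3
    refine hσ [3,2,1] (by simp) (contains321 σ
      (x := ⟨((f ⟨1, by decide⟩ : Fin N) : ℕ) - a, by have := (f ⟨1, by decide⟩).isLt; omega⟩)
      (y := ⟨((f ⟨2, by decide⟩ : Fin N) : ℕ) - a, by have := (f ⟨2, by decide⟩).isLt; omega⟩)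
      (z := ⟨((f ⟨3, by decide⟩ : Fin N) : ℕ) - a, by have := (f ⟨3, by decide⟩).isLt; omega⟩)
      ?_ ?_ ?_ ?_) <;> first | (rw [Fin.mk_lt_mk]; omega) | (rw [Fin.lt_def]; omega)

end Bwd
end Stmt7Aux

namespace Stmt7Aux

def tailσ {N : ℕ} (P : Equiv.Perm (Fin N)) (a c : ℕ) (hac : a + c = N)
    (H2 : ∀ x : Fin N, a ≤ (x : ℕ) → a ≤ (P x : ℕ))
    (H2' : ∀ x : Fin N, a ≤ (x : ℕ) → a ≤ (P.symm x : ℕ)) : Equiv.Perm (Fin c) where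
  toFun j := ⟨(P ⟨a + (j : ℕ), by omega⟩ : ℕ) - a, by
    have h1 := (P ⟨a + (j : ℕ), by omega⟩).isLt
    have h2 := H2 ⟨a + (j : ℕ), by omega⟩ (by simp)
    omega⟩
  invFun j := ⟨(P.symm ⟨a + (j : ℕ), by omega⟩ : ℕ) - a, by
    have h1 := (P.symm ⟨a + (j : ℕ), by omega⟩).isLt
    have h2 := H2' ⟨a + (j : ℕ), by omega⟩ (by simp)
    omega⟩
  left_inv j := by
    apply Fin.ext
    have h2 := H2 ⟨a + (j : ℕ), by omega⟩ (by simp)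
    show (P.symm ⟨a + ((P ⟨a + (j : ℕ), by omega⟩ : ℕ) - a), by
        have := (P ⟨a + (j : ℕ), by omega⟩).isLt; omega⟩ : ℕ) - a = (j : ℕ)
    have e : (⟨a + ((P ⟨a + (j : ℕ), by omega⟩ : ℕ) - a), by
        have := (P ⟨a + (j : ℕ), by omega⟩).isLt; omega⟩ : Fin N) = P ⟨a + (j : ℕ), by omega⟩ :=
      Fin.ext (by simp; omega)
    rw [e, Equiv.symm_apply_apply]
    simp
  right_inv j := by
    apply Fin.ext
    have h2 := H2' ⟨a + (j : ℕ), by omega⟩ (by simp)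
    show (P ⟨a + ((P.symm ⟨a + (j : ℕ), by omega⟩ : ℕ) - a), by
        have := (P.symm ⟨a + (j : ℕ), by omega⟩).isLt; omega⟩ : ℕ) - a = (j : ℕ)
    have e : (⟨a + ((P.symm ⟨a + (j : ℕ), by omega⟩ : ℕ) - a), by
        have := (P.symm ⟨a + (j : ℕ), by omega⟩).isLt; omega⟩ : Fin N) = P.symm ⟨a + (j : ℕ), by omega⟩ :=
      Fin.ext (by simp; omega)
    rw [e, Equiv.apply_symm_apply]
    simp

lemma tailσ_VR {N : ℕ} (P : Equiv.Perm (Fin N)) (a c : ℕ) (hac : a + c = N)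
    (H2 : ∀ x : Fin N, a ≤ (x : ℕ) → a ≤ (P x : ℕ))
    (H2' : ∀ x : Fin N, a ≤ (x : ℕ) → a ≤ (P.symm x : ℕ)) (j : Fin c) :
    (P ⟨a + (j : ℕ), by omega⟩ : ℕ) = a + ((tailσ P a c hac H2 H2') j : ℕ) := by
  have h2 := H2 ⟨a + (j : ℕ), by omega⟩ (by simp)
  show _ = a + ((P ⟨a + (j : ℕ), by omega⟩ : ℕ) - a)
  omega

end Stmt7Aux

namespace Stmt7Aux

lemma fwd {N : ℕ} (P : Equiv.Perm (Fin N))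
    (hav : AvoidsAll P [[2,3,1],[3,1,2],[1,4,3,2]]) :
    ∃ (a c : ℕ) (h : a + c = N) (σ : Equiv.Perm (Fin c)),
      AvoidsAll σ [[2,3,1],[3,1,2],[3,2,1]] ∧
      P = (finCongr h).permCongr (dsum (Fin.revPerm : Equiv.Perm (Fin a)) σ) := by
  rcases Nat.eq_zero_or_pos N with hN | hN
  · subst hN
    refine ⟨0, 0, rfl, Equiv.refl _, ?_, ?_⟩
    · intro q hq hcon
      obtain ⟨f, -, -⟩ := hcon
      simp only [List.mem_cons, List.not_mem_nil, or_false] at hq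
      rcases hq with rfl | rfl | rfl <;> exact (f ⟨0, by decide⟩).elim0
    · apply Equiv.ext; intro x; exact x.elim0
  · have hav1 := hav [2,3,1] (by simp)
    have hav2 := hav [3,1,2] (by simp)
    have hav3 := hav [1,4,3,2] (by simp)
    obtain ⟨pp, p, hpv, hPppv, hval0⟩ :
        ∃ (pp : Fin N) (p : ℕ), (pp : ℕ) = p ∧ (P pp : ℕ) = 0 ∧
          ∀ x : Fin N, (P x : ℕ) = 0 → x = pp := by
      refine ⟨P.symm ⟨0, hN⟩, (P.symm ⟨0, hN⟩ : ℕ), rfl, ?_, ?_⟩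
      · rw [P.apply_symm_apply]
      · intro x hx
        have h1 : P x = ⟨0, hN⟩ := Fin.ext hx
        have h2 := congrArg P.symm h1
        rwa [Equiv.symm_apply_apply] at h2
    have hplt : p < N := by have := pp.isLt; omega
    -- S1 : P is strictly decreasing on positions ≤ p
    have S1 : ∀ x y : Fin N, x < y → (y : ℕ) ≤ p → P y < P x := by
      intro x y hxy hy
      rcases lt_trichotomy (P x) (P y) with hlt | heq | hgt
      · exfalso
        have hxne : x ≠ pp := by
          intro e
          rw [e] at hxy; rw [Fin.lt_def] at hxy; omega
        have hPx0 : (0 : ℕ) < (P x : ℕ) := by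
          rcases Nat.eq_zero_or_pos (P x : ℕ) with h0 | h0
          · exact absurd (hval0 x h0) hxne
          · exact h0
        by_cases hyp : y = pp
        · rw [hyp] at hlt
          rw [Fin.lt_def, hPppv] at hlt
          omega
        · have hyltp : (y : ℕ) < p :=
            lt_of_le_of_ne hy (fun e => hyp (Fin.ext (by rw [hpv]; exact e)))
          exact hav1 (contains231 P hxy
            (show y < pp from Fin.lt_def.mpr (by rw [hpv]; exact hyltp))
            (by rw [Fin.lt_def, hPppv]; omega) hlt)
      · exact absurd (P.injective heq) (ne_of_lt hxy)
      · exact hgt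
    -- S2 : values at positions ≤ p are ≤ p
    have S2 : ∀ x : Fin N, (x : ℕ) ≤ p → (P x : ℕ) ≤ p := by
      by_contra hS
      push_neg at hS
      obtain ⟨x, hxle, hxgt⟩ := hS
      have hk : ∃ k : Fin N, p < (k : ℕ) ∧ (P k : ℕ) ≤ p := by
        by_contra hno
        push_neg at hno
        have hxnot : x ∉ Finset.Ioi pp := by
          simp only [Finset.mem_Ioi]
          intro hc
          rw [Fin.lt_def] at hc
          omega
        have hmaps : ∀ t ∈ insert x (Finset.Ioi pp), P t ∈ Finset.Ioi pp := by
          intro t ht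
          rcases Finset.mem_insert.mp ht with rfl | ht'
          · simp only [Finset.mem_Ioi]
            rw [Fin.lt_def]
            omega
          · simp only [Finset.mem_Ioi] at ht' ⊢
            rw [Fin.lt_def] at ht' ⊢
            have := hno t (by omega)
            omega
        have hinj : Set.InjOn (⇑P) ((insert x (Finset.Ioi pp) : Finset (Fin N)) : Set (Fin N)) :=
          fun u _ v _ h => P.injective h
        have hcc := Finset.card_le_card_of_injOn (⇑P) hmaps hinj
        rw [Finset.card_insert_of_notMem hxnot] at hcc
        omega
      obtain ⟨k, hk1, hk2⟩ := hk
      have hxpp : x < pp := by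
        rw [Fin.lt_def]
        rw [hpv]
        rcases lt_or_eq_of_le hxle with h | h
        · exact h
        · exfalso
          have : x = pp := Fin.ext (by rw [hpv]; exact h)
          rw [this, hPppv] at hxgt
          omega
      have hknz : (0 : ℕ) < (P k : ℕ) := by
        rcases Nat.eq_zero_or_pos (P k : ℕ) with h0 | h0
        · exfalso
          have := hval0 k h0
          rw [this] at hk1
          omega
        · exact h0
      exact hav2 (contains312 P hxpp (show pp < k from Fin.lt_def.mpr (by rw [hpv]; exact hk1))
        (by rw [Fin.lt_def, hPppv]; omega)
        (by rw [Fin.lt_def]; omega))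
    -- HA : lower bound
    have HA : ∀ d : ℕ, ∀ x : Fin N, (x : ℕ) + d = p → d ≤ (P x : ℕ) := by
      intro d
      induction d with
      | zero => intro x _; exact Nat.zero_le _
      | succ d ih =>
        intro x hx
        have hlt : (x : ℕ) + 1 < N := by have := pp.isLt; omega
        have h1 : P ⟨(x : ℕ) + 1, hlt⟩ < P x :=
          S1 x ⟨(x : ℕ) + 1, hlt⟩ (Fin.lt_def.mpr (by simp)) (by simp; omega)
        have h2 := ih ⟨(x : ℕ) + 1, hlt⟩ (by simp; omega)
        rw [Fin.lt_def] at h1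
        omega
    -- HB : upper bound
    have HB : ∀ v : ℕ, ∀ x : Fin N, (x : ℕ) = v → (x : ℕ) ≤ p → (P x : ℕ) + (x : ℕ) ≤ p := by
      intro v
      induction v with
      | zero =>
        intro x hx0 hxp
        have := S2 x hxp
        omega
      | succ v ih =>
        intro x hxv hxp
        have hvlt : v < N := by have := x.isLt; omega
        have h1 : P x < P ⟨v, hvlt⟩ :=
          S1 ⟨v, hvlt⟩ x (Fin.lt_def.mpr (by show v < (x : ℕ); omega)) hxp
        have h2 := ih ⟨v, hvlt⟩ rfl (by show v ≤ p; omega)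
        rw [Fin.lt_def] at h1
        have q1 : ((P x : Fin N) : ℕ) < ((P ⟨v, hvlt⟩ : Fin N) : ℕ) := h1
        have q2 : ((P ⟨v, hvlt⟩ : Fin N) : ℕ) + v ≤ p := by simpa using h2
        omega
    have H1 : ∀ x : Fin N, (x : ℕ) ≤ p → (P x : ℕ) = p - (x : ℕ) := by
      intro x hx
      have ha := HA (p - (x : ℕ)) x (by omega)
      have hb := HB (x : ℕ) x rfl hx
      omega
    have H2 : ∀ x : Fin N, p + 1 ≤ (x : ℕ) → p + 1 ≤ (P x : ℕ) := by
      intro x hx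
      by_contra h
      push_neg at h
      have hj : p - (P x : ℕ) < N := by have := pp.isLt; omega
      have e := H1 ⟨p - (P x : ℕ), hj⟩ (by simp)
      simp only [Fin.val_mk] at e
      have heq : P ⟨p - (P x : ℕ), hj⟩ = P x := Fin.ext (by rw [e]; omega)
      have := congrArg Fin.val (P.injective heq)
      simp only [Fin.val_mk] at this
      omega
    have H2' : ∀ x : Fin N, p + 1 ≤ (x : ℕ) → p + 1 ≤ (P.symm x : ℕ) := by
      intro x hx
      by_contra h
      push_neg at h
      have e := H1 (P.symm x) (by omega)
      rw [Equiv.apply_symm_apply] at e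
      omega
    have hac : (p + 1) + (N - (p + 1)) = N := by omega
    obtain ⟨σ, VRt⟩ : ∃ σ : Equiv.Perm (Fin (N - (p + 1))), ∀ j : Fin (N - (p + 1)),
        (P ⟨(p + 1) + (j : ℕ), by omega⟩ : ℕ) = (p + 1) + (σ j : ℕ) :=
      ⟨tailσ P (p + 1) (N - (p + 1)) hac H2 H2', tailσ_VR P (p + 1) (N - (p + 1)) hac H2 H2'⟩
    refine ⟨p + 1, N - (p + 1), hac, σ, ?_, ?_⟩
    · -- σ avoids the three patterns
      intro q hq
      simp only [List.mem_cons, List.not_mem_nil, or_false] at hq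
      rcases hq with rfl | rfl | rfl
      · intro hcon; exact hav1 (lift_pat P σ hac VRt [2,3,1] hcon)
      · intro hcon; exact hav2 (lift_pat P σ hac VRt [3,1,2] hcon)
      · rintro ⟨g, hg, hc⟩
        have hg01 : g ⟨0, by decide⟩ < g ⟨1, by decide⟩ := hg (by decide)
        have hg12 : g ⟨1, by decide⟩ < g ⟨2, by decide⟩ := hg (by decide)
        have hs10 : σ (g ⟨1, by decide⟩) < σ (g ⟨0, by decide⟩) := (hc _ _).mp (by decide)
        have hs21 : σ (g ⟨2, by decide⟩) < σ (g ⟨1, by decide⟩) := (hc _ _).mp (by decide)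
        have k0 := VRt (g ⟨0, by decide⟩)
        have k1 := VRt (g ⟨1, by decide⟩)
        have k2 := VRt (g ⟨2, by decide⟩)
        rw [Fin.lt_def] at hg01 hg12 hs10 hs21
        refine hav3 (contains1432 P
          (x := pp)
          (y := ⟨(p + 1) + ((g ⟨0, by decide⟩ : Fin (N - (p + 1))) : ℕ), by
            have := (g ⟨0, by decide⟩).isLt; omega⟩)
          (z := ⟨(p + 1) + ((g ⟨1, by decide⟩ : Fin (N - (p + 1))) : ℕ), by
            have := (g ⟨1, by decide⟩).isLt; omega⟩)
          (w := ⟨(p + 1) + ((g ⟨2, by decide⟩ : Fin (N - (p + 1))) : ℕ), by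
            have := (g ⟨2, by decide⟩).isLt; omega⟩)
          ?_ ?_ ?_ ?_ ?_ ?_)
        · refine Fin.lt_def.mpr ?_
          show (pp : ℕ) < (p + 1) + ((g ⟨0, by decide⟩ : Fin (N - (p + 1))) : ℕ)
          omega
        · refine Fin.lt_def.mpr ?_
          show (p + 1) + ((g ⟨0, by decide⟩ : Fin (N - (p + 1))) : ℕ)
              < (p + 1) + ((g ⟨1, by decide⟩ : Fin (N - (p + 1))) : ℕ)
          omega
        · refine Fin.lt_def.mpr ?_
          show (p + 1) + ((g ⟨1, by decide⟩ : Fin (N - (p + 1))) : ℕ)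
              < (p + 1) + ((g ⟨2, by decide⟩ : Fin (N - (p + 1))) : ℕ)
          omega
        · refine Fin.lt_def.mpr ?_
          show (P pp : ℕ) < (P ⟨(p + 1) + ((g ⟨2, by decide⟩ : Fin (N - (p + 1))) : ℕ), by
            have := (g ⟨2, by decide⟩).isLt; omega⟩ : ℕ)
          omega
        · refine Fin.lt_def.mpr ?_
          show (P ⟨(p + 1) + ((g ⟨2, by decide⟩ : Fin (N - (p + 1))) : ℕ), by
              have := (g ⟨2, by decide⟩).isLt; omega⟩ : ℕ)
            < (P ⟨(p + 1) + ((g ⟨1, by decide⟩ : Fin (N - (p + 1))) : ℕ), by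
              have := (g ⟨1, by decide⟩).isLt; omega⟩ : ℕ)
          omega
        · refine Fin.lt_def.mpr ?_
          show (P ⟨(p + 1) + ((g ⟨1, by decide⟩ : Fin (N - (p + 1))) : ℕ), by
              have := (g ⟨1, by decide⟩).isLt; omega⟩ : ℕ)
            < (P ⟨(p + 1) + ((g ⟨0, by decide⟩ : Fin (N - (p + 1))) : ℕ), by
              have := (g ⟨0, by decide⟩).isLt; omega⟩ : ℕ)
          omega
    · -- the permutation identity
      apply Equiv.ext
      intro x
      apply Fin.ext
      rcases lt_or_ge (x : ℕ) (p + 1) with hx | hx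
      · rw [H1 x (by omega), VL hac σ x hx]
        omega
      · have hjlt : (x : ℕ) - (p + 1) < N - (p + 1) := by have := x.isLt; omega
        have e : (⟨(p + 1) + (((⟨(x : ℕ) - (p + 1), hjlt⟩ : Fin (N - (p + 1)))) : ℕ), by
            have := x.isLt; simp; omega⟩ : Fin N) = x := Fin.ext (by simp; omega)
        have hr := VR hac σ ⟨(x : ℕ) - (p + 1), hjlt⟩
        rw [e] at hr
        have hl := VRt ⟨(x : ℕ) - (p + 1), hjlt⟩
        rw [e] at hl
        rw [hl, hr]

end Stmt7Aux

theorem stmt7 (N : ℕ) (P : Equiv.Perm (Fin N)) :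
    AvoidsAll P [[2,3,1],[3,1,2],[1,4,3,2]] ↔
      ∃ (a c : ℕ) (h : a + c = N) (σ : Equiv.Perm (Fin c)), AvoidsAll σ [[2,3,1],[3,1,2],[3,2,1]] ∧
        P = (finCongr h).permCongr (dsum (Fin.revPerm : Equiv.Perm (Fin a)) σ) := by
  constructor
  · exact fun hav => Stmt7Aux.fwd P hav
  · rintro ⟨a, c, h, σ, hσ, hP⟩
    exact Stmt7Aux.bwd h σ P hP hσ
end

section
/- For natural numbers n ≥ k, the number of permutations of length n avoiding 231, 312, and 321 that have exactly k inversions is the binomial coefficient C(n-k, k). -/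
open Finset MvPolynomial
open scoped Classical

/-!
A permutation avoids 231, 312 and 321 exactly when `π i < π j` whenever `i + 2 ≤ j`: three
positions `i < i + 1 < j` with `π j < π i` always form one of these patterns. All inversions of
such a permutation are adjacent transpositions `(i, i + 1)`, so it is determined by its descent
set `D`, which has no two consecutive elements; conversely every such `D ⊆ {0, …, n - 2}` is the
descent set of the product of the transpositions `(i, i + 1)`, `i ∈ D`. Hence permutations with
`k` inversions correspond to `k`-subsets of `{0, …, n - 2}` without consecutive elements, and
splitting on whether `n - 2` belongs to the subset gives Pascal's recursion for `C(n - k, k)`.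
-/

namespace Equiv.Perm

variable {n : ℕ}

theorem val_eq_card_filter_lt (τ : Perm (Fin n)) (i : Fin n) :
    (τ i : ℕ) = #{j | τ j < τ i} := by
  rw [← Fin.card_Iio, ← filter_gt_eq_Iio]
  exact (card_equiv τ (by simp)).symm

theorem eq_of_inversion_iff {π σ : Perm (Fin n)}
    (h : ∀ a b, a < b → (π b < π a ↔ σ b < σ a)) : π = σ := by
  ext i
  rw [val_eq_card_filter_lt, val_eq_card_filter_lt]
  congr 1
  ext j
  simp only [mem_filter, mem_univ, true_and]
  rcases lt_trichotomy j i with hji | rfl | hij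
  · have hπ : π j ≠ π i := π.injective.ne hji.ne
    have hσ : σ j ≠ σ i := σ.injective.ne hji.ne
    rw [← not_iff_not, not_lt, not_lt, hπ.symm.le_iff_lt, hσ.symm.le_iff_lt]
    exact h j i hji
  · simp
  · exact h i j hij

end Equiv.Perm

def HasOnlyAdjacentInversions {n : ℕ} (π : Equiv.Perm (Fin n)) : Prop :=
  ∀ i j : Fin n, (i : ℕ) + 2 ≤ j → π i < π j

section Patterns

variable {n : ℕ} {π : Equiv.Perm (Fin n)}

theorem not_containsPat_of_hasOnlyAdjacentInversions (hπ : HasOnlyAdjacentInversions π)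
    {p : List ℕ} (i j : Fin p.length) (hij : (i : ℕ) + 2 ≤ j) (hp : p.get j < p.get i) :
    ¬ ContainsPat π p := by
  rintro ⟨f, hf, hfp⟩
  have hf₁ : f i < f ⟨i + 1, by omega⟩ := hf (Fin.mk_lt_mk.2 (by omega))
  have hf₂ : f ⟨i + 1, by omega⟩ < f j := hf (Fin.mk_lt_mk.2 (by omega))
  exact ((hfp j i).1 hp).not_gt (hπ _ _ (by omega))

theorem avoidsAll_of_hasOnlyAdjacentInversions (hπ : HasOnlyAdjacentInversions π) :
    AvoidsAll π [[2,3,1],[3,1,2],[3,2,1]] := by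
  intro p hp
  fin_cases hp <;>
    exact not_containsPat_of_hasOnlyAdjacentInversions hπ 0 2 le_rfl (by decide)

theorem hasOnlyAdjacentInversions_of_avoidsAll (hπ : AvoidsAll π [[2,3,1],[3,1,2],[3,2,1]]) :
    HasOnlyAdjacentInversions π := by
  intro i j hij
  by_contra! hji
  set m : Fin n := ⟨i + 1, by omega⟩
  have hmono : StrictMono ![i, m, j] := by
    refine Fin.strictMono_iff_lt_succ.2 fun u => ?_
    fin_cases u <;> simp [m, Fin.lt_def]
    omega
  have hji' : π j < π i := hji.lt_of_ne (π.injective.ne (by simp [Fin.ext_iff]; omega))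
  have hmi : π m ≠ π i := π.injective.ne (by simp [m, Fin.ext_iff])
  have hmj : π m ≠ π j := π.injective.ne (by simp [m, Fin.ext_iff]; omega)
  rcases lt_trichotomy (π m) (π j) with h | h | h
  · apply hπ [3,1,2] (by simp)
    refine ⟨![i, m, j], hmono, fun u v => ?_⟩
    fin_cases u <;> fin_cases v <;> simp <;> order
  · exact hmj h
  · rcases lt_or_gt_of_ne hmi with h' | h'
    · apply hπ [3,2,1] (by simp)
      refine ⟨![i, m, j], hmono, fun u v => ?_⟩
      fin_cases u <;> fin_cases v <;> simp <;> order
    · apply hπ [2,3,1] (by simp)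
      refine ⟨![i, m, j], hmono, fun u v => ?_⟩
      fin_cases u <;> fin_cases v <;> simp <;> order

end Patterns

def Sparse (s : Finset ℕ) : Prop := ∀ i ∈ s, i + 1 ∉ s

theorem sparse_insert_iff {a : ℕ} {s : Finset ℕ} :
    Sparse (insert a s) ↔ Sparse s ∧ a + 1 ∉ s ∧ ∀ i ∈ s, i + 1 ≠ a := by
  simp only [Sparse, mem_insert, forall_eq_or_imp]
  grind

theorem filter_sparse_image_insert (n k : ℕ) :
    {s ∈ (powersetCard k (range n)).image (insert n) | Sparse s} =
      {s ∈ powersetCard k (range (n - 1)) | Sparse s}.image (insert n) := by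
  rw [filter_image]
  congr 1
  ext t
  simp only [mem_filter, mem_powersetCard, sparse_insert_iff, subset_iff, mem_range]
  grind

theorem card_sparse_powersetCard : ∀ n k : ℕ,
    #{s ∈ powersetCard k (range (n - 1)) | Sparse s} = (n - k).choose k
  | _, 0 => by simp [Sparse, filter_singleton]
  | 0, k + 1 => by simp
  | 1, k + 1 => by simp
  | n + 2, k + 1 => by
    have hdisj : Disjoint {s ∈ powersetCard (k + 1) (range n) | Sparse s}
        {s ∈ (powersetCard k (range n)).image (insert n) | Sparse s} := by
      refine disjoint_left.2 fun s hs hs' => ?_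
      simp only [mem_filter, mem_powersetCard, mem_image] at hs hs'
      obtain ⟨⟨t, -, rfl⟩, -⟩ := hs'
      exact notMem_range_self (hs.1.1 (mem_insert_self n t))
    have hinj : Set.InjOn (insert n)
        (({s ∈ powersetCard k (range (n - 1)) | Sparse s} : Finset (Finset ℕ)) :
          Set (Finset ℕ)) := by
      intro s hs t ht hst
      have hn : ∀ u ∈ powersetCard k (range (n - 1)), n ∉ u := fun u hu hn => by
        have := mem_range.1 ((mem_powersetCard.1 hu).1 hn)
        omega
      rw [← erase_insert (hn s (mem_filter.1 hs).1), ← erase_insert (hn t (mem_filter.1 ht).1),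
        hst]
    have ih : #{s ∈ powersetCard (k + 1) (range n) | Sparse s} = (n - k).choose (k + 1) := by
      simpa using card_sparse_powersetCard (n + 1) (k + 1)
    rw [show n + 2 - 1 = n + 1 from rfl, range_add_one,
      powersetCard_succ_insert notMem_range_self, filter_union, card_union_of_disjoint hdisj,
      filter_sparse_image_insert, card_image_of_injOn hinj, ih, card_sparse_powersetCard n]
    rcases le_or_gt k n with hk | hk
    · rw [show n + 2 - (k + 1) = n - k + 1 by omega, Nat.choose_succ_succ', add_comm]
    · rw [Nat.choose_eq_zero_of_lt (by omega), Nat.choose_eq_zero_of_lt (by omega),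
        Nat.choose_eq_zero_of_lt (by omega)]

def descents {n : ℕ} (π : Equiv.Perm (Fin n)) : Finset ℕ :=
  {i ∈ range n | ∃ a b : Fin n, (a : ℕ) = i ∧ (b : ℕ) = i + 1 ∧ π b < π a}

section Descents

variable {n : ℕ} {π : Equiv.Perm (Fin n)}

theorem mem_descents {i : ℕ} :
    i ∈ descents π ↔ ∃ a b : Fin n, (a : ℕ) = i ∧ (b : ℕ) = i + 1 ∧ π b < π a := by
  rw [descents, mem_filter, mem_range, and_iff_right_iff_imp]
  rintro ⟨a, -, rfl, -, -⟩
  exact a.2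

theorem descents_subset_range : descents π ⊆ range (n - 1) := by
  intro i hi
  obtain ⟨-, b, -, hb, -⟩ := mem_descents.1 hi
  have := b.2
  rw [mem_range]
  omega

theorem lt_iff_mem_descents (hπ : HasOnlyAdjacentInversions π) {a b : Fin n} (hab : a < b) :
    π b < π a ↔ (b : ℕ) = a + 1 ∧ (a : ℕ) ∈ descents π := by
  constructor
  · intro hba
    have hb : (b : ℕ) = a + 1 := by
      by_contra hb
      exact hba.not_gt (hπ a b (by rw [Fin.lt_def] at hab; omega))
    exact ⟨hb, mem_descents.2 ⟨a, b, rfl, hb, hba⟩⟩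
  · rintro ⟨hb, hd⟩
    obtain ⟨a', b', ha', hb', h⟩ := mem_descents.1 hd
    rwa [Fin.ext (ha'.trans rfl : (a' : ℕ) = a), Fin.ext (hb'.trans hb.symm)] at h

theorem sparse_descents (hπ : HasOnlyAdjacentInversions π) : Sparse (descents π) := by
  intro i hi hi'
  obtain ⟨a, b, rfl, hb, hab⟩ := mem_descents.1 hi
  obtain ⟨b', c, hb', hc, hbc⟩ := mem_descents.1 hi'
  obtain rfl : b' = b := Fin.ext (hb'.trans hb.symm)
  exact (hbc.trans hab).not_gt (hπ a c (by omega))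

theorem invNum_eq_card_descents (hπ : HasOnlyAdjacentInversions π) :
    invNum π = #(descents π) := by
  refine card_nbij (fun p => (p.1 : ℕ)) (fun p hp => ?_) (fun p hp q hq hpq => ?_)
    (fun i hi => ?_)
  · simp only [coe_filter, mem_univ, true_and, Set.mem_ofPred_eq] at hp
    exact ((lt_iff_mem_descents hπ hp.1).1 hp.2).2
  · simp only [coe_filter, mem_univ, true_and, Set.mem_ofPred_eq] at hp hq
    have hp₂ := ((lt_iff_mem_descents hπ hp.1).1 hp.2).1
    have hq₂ := ((lt_iff_mem_descents hπ hq.1).1 hq.2).1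
    simp only at hpq
    ext <;> omega
  · obtain ⟨a, b, rfl, hb, hab⟩ := mem_descents.1 hi
    refine ⟨(a, b), ?_, rfl⟩
    simp only [coe_filter, mem_univ, true_and, Set.mem_ofPred_eq]
    exact ⟨Fin.lt_def.2 (by omega), hab⟩

theorem eq_of_descents_eq {σ : Equiv.Perm (Fin n)} (hπ : HasOnlyAdjacentInversions π)
    (hσ : HasOnlyAdjacentInversions σ) (h : descents π = descents σ) : π = σ :=
  Equiv.Perm.eq_of_inversion_iff fun a b hab => by
    rw [lt_iff_mem_descents hπ hab, lt_iff_mem_descents hσ hab, h]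

end Descents

def swapAt (D : Finset ℕ) (i : ℕ) : ℕ :=
  if i ∈ D then i + 1 else if i ≠ 0 ∧ i - 1 ∈ D then i - 1 else i

section SwapAt

variable {D : Finset ℕ} {n : ℕ}

theorem swapAt_lt (hD : ∀ i ∈ D, i + 1 < n) {i : ℕ} (hi : i < n) : swapAt D i < n := by
  unfold swapAt
  split_ifs with h
  · exact hD i h
  all_goals omega

theorem swapAt_swapAt (hs : Sparse D) (i : ℕ) : swapAt D (swapAt D i) = i := by
  unfold swapAt
  by_cases h : i ∈ D
  · simp [h, hs i h]
  by_cases h' : i ≠ 0 ∧ i - 1 ∈ D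
  · obtain ⟨hi, hi'⟩ := h'
    simp [h, hi, hi', Nat.sub_add_cancel (Nat.pos_of_ne_zero hi)]
  · simp [h, h']

theorem swapAt_lt_swapAt (hs : Sparse D) {i j : ℕ} (hij : i + 2 ≤ j) :
    swapAt D i < swapAt D j := by
  unfold swapAt
  rcases hij.eq_or_lt with rfl | hij
  · have := hs i
    split_ifs <;> simp_all <;> omega
  · split_ifs <;> omega

theorem swapAt_succ_lt_iff (hs : Sparse D) {i : ℕ} :
    swapAt D (i + 1) < swapAt D i ↔ i ∈ D := by
  have := hs i
  unfold swapAt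
  split_ifs <;> simp_all <;> omega

end SwapAt

def permOfSparse {n : ℕ} (D : Finset ℕ) (hD : ∀ i ∈ D, i + 1 < n) (hs : Sparse D) :
    Equiv.Perm (Fin n) :=
  Function.Involutive.toPerm (fun i => ⟨swapAt D i, swapAt_lt hD i.2⟩)
    fun i => Fin.ext (swapAt_swapAt hs i)

section PermOfSparse

variable {n : ℕ} {D : Finset ℕ} (hD : ∀ i ∈ D, i + 1 < n) (hs : Sparse D)

theorem hasOnlyAdjacentInversions_permOfSparse :
    HasOnlyAdjacentInversions (permOfSparse D hD hs) :=
  fun _ _ hij => Fin.lt_def.2 (swapAt_lt_swapAt hs hij)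

theorem descents_permOfSparse : descents (permOfSparse D hD hs) = D := by
  ext i
  rw [mem_descents]
  constructor
  · rintro ⟨a, b, rfl, hb, hab⟩
    rw [← swapAt_succ_lt_iff hs, ← hb]
    exact hab
  · intro hi
    refine ⟨⟨i, by have := hD i hi; omega⟩, ⟨i + 1, hD i hi⟩, rfl, rfl, ?_⟩
    exact Fin.lt_def.2 ((swapAt_succ_lt_iff hs).2 hi)

end PermOfSparse

theorem stmt9_general (n k : ℕ) :
    {π : Equiv.Perm (Fin n) | AvoidsAll π [[2,3,1],[3,1,2],[3,2,1]] ∧ invNum π = k}.ncard =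
      (n - k).choose k := by
  rw [← card_sparse_powersetCard, ← Set.ncard_coe_finset]
  refine Set.ncard_congr (fun π _ => descents π) ?_ ?_ ?_
  · rintro π ⟨hπ, rfl⟩
    have hπ := hasOnlyAdjacentInversions_of_avoidsAll hπ
    simp only [coe_filter, mem_powersetCard, Set.mem_ofPred_eq]
    exact ⟨⟨descents_subset_range, (invNum_eq_card_descents hπ).symm⟩, sparse_descents hπ⟩
  · rintro π σ ⟨hπ, -⟩ ⟨hσ, -⟩ h
    exact eq_of_descents_eq (hasOnlyAdjacentInversions_of_avoidsAll hπ)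
      (hasOnlyAdjacentInversions_of_avoidsAll hσ) h
  · intro D hD
    simp only [coe_filter, mem_powersetCard, Set.mem_ofPred_eq] at hD
    obtain ⟨⟨hsub, rfl⟩, hs⟩ := hD
    have hD : ∀ i ∈ D, i + 1 < n := fun i hi => by have := mem_range.1 (hsub hi); omega
    have hπ := hasOnlyAdjacentInversions_permOfSparse hD hs
    refine ⟨permOfSparse D hD hs, ⟨avoidsAll_of_hasOnlyAdjacentInversions hπ, ?_⟩,
      descents_permOfSparse hD hs⟩
    rw [invNum_eq_card_descents hπ, descents_permOfSparse]

theorem stmt9 (n k : ℕ) (h : k ≤ n) :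
    {π : Equiv.Perm (Fin n) | AvoidsAll π [[2,3,1],[3,1,2],[3,2,1]] ∧ invNum π = k}.ncard =
      (n - k).choose k :=
  stmt9_general n k
end

section
/- For k ≥ 3 and n ≥ 1, the number of permutations of length n in Av(231, 312, 4321, 21543) with exactly k inversions is C(n-k, k) + C(n-k+1, k-2). -/
open Finset MvPolynomial
open scoped Classical

/-!
Avoiding `231` and `312` means being layered (a direct sum of decreasing runs), and a layered
permutation of length `n` is determined by its descent set `D`, which may be any subset of
`{0, …, n - 2}`. Avoiding also `4321` and `21543` means that every pair of adjacent descents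
starts at the minimum of `D`; then runs have length at most three, and the number of inversions
is `|D|` plus the number of adjacent pairs in `D`. Such a `D` giving `k` inversions is either
sparse (no two adjacent elements), which gives `C(n - k, k)`, or `{m, m + 1}` followed by a
sparse `(k - 3)`-set above `m + 2`; summing over `m` gives `C(n - k + 1, k - 2)`.
-/

namespace LayeredAvoidance

variable {n : ℕ}

/-- `π` read on `ℕ` (the identity beyond `n`), so that positions and values can be handled by
linear arithmetic. -/
def natVal (π : Equiv.Perm (Fin n)) (i : ℕ) : ℕ := if h : i < n then π ⟨i, h⟩ else i

lemma natVal_of_lt (π : Equiv.Perm (Fin n)) {i : ℕ} (h : i < n) : natVal π i = π ⟨i, h⟩ :=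
  dif_pos h

@[simp]
lemma natVal_val (π : Equiv.Perm (Fin n)) (x : Fin n) : natVal π x = π x :=
  natVal_of_lt π x.is_lt

lemma natVal_lt (π : Equiv.Perm (Fin n)) {i : ℕ} (h : i < n) : natVal π i < n := by
  rw [natVal_of_lt π h]
  exact (π _).is_lt

lemma natVal_injective (π : Equiv.Perm (Fin n)) : Function.Injective (natVal π) := by
  intro i j h
  by_cases hi : i < n <;> by_cases hj : j < n
  · rw [natVal_of_lt π hi, natVal_of_lt π hj] at h
    simpa using π.injective (Fin.val_injective h)
  · have := natVal_lt π hi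
    rw [h, natVal, dif_neg hj] at this
    omega
  · have := natVal_lt π hj
    rw [← h, natVal, dif_neg hi] at this
    omega
  · rwa [natVal, natVal, dif_neg hi, dif_neg hj] at h

lemma exists_natVal_eq (π : Equiv.Perm (Fin n)) {v : ℕ} (hv : v < n) :
    ∃ i < n, natVal π i = v :=
  ⟨π.symm ⟨v, hv⟩, (π.symm ⟨v, hv⟩).is_lt, by simp⟩

lemma containsPat_iff {π : Equiv.Perm (Fin n)} {p : List ℕ} :
    ContainsPat π p ↔ ∃ g : Fin p.length → ℕ, StrictMono g ∧ (∀ i, g i < n) ∧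
      ∀ i j, p.get i < p.get j ↔ natVal π (g i) < natVal π (g j) := by
  constructor
  · rintro ⟨f, hf, hp⟩
    exact ⟨fun i => f i, Fin.val_strictMono.comp hf, fun i => (f i).is_lt, by simpa using hp⟩
  · rintro ⟨g, hg, hgn, hp⟩
    refine ⟨fun i => ⟨g i, hgn i⟩, fun i j hij => hg hij, fun i j => ?_⟩
    simpa [natVal_of_lt π (hgn _)] using hp i j

lemma containsPat_231 {π : Equiv.Perm (Fin n)} :
    ContainsPat π [2,3,1] ↔ ∃ a b c, a < b ∧ b < c ∧ c < n ∧
      natVal π c < natVal π a ∧ natVal π a < natVal π b := by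
  rw [containsPat_iff]
  constructor
  · rintro ⟨g, hg, hgn, hp⟩
    exact ⟨g 0, g 1, g 2, hg (by decide), hg (by decide), hgn 2,
      (hp 2 0).1 (by decide), (hp 0 1).1 (by decide)⟩
  · rintro ⟨a, b, c, hab, hbc, hc, h1, h2⟩
    refine ⟨![a, b, c], Fin.strictMono_iff_lt_succ.2 ?_, ?_, ?_⟩
    · intro i; fin_cases i <;> simpa
    · intro i; fin_cases i <;> simp <;> omega
    · intro i j; fin_cases i <;> fin_cases j <;> simp <;> omega

lemma containsPat_312 {π : Equiv.Perm (Fin n)} :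
    ContainsPat π [3,1,2] ↔ ∃ a b c, a < b ∧ b < c ∧ c < n ∧
      natVal π b < natVal π c ∧ natVal π c < natVal π a := by
  rw [containsPat_iff]
  constructor
  · rintro ⟨g, hg, hgn, hp⟩
    exact ⟨g 0, g 1, g 2, hg (by decide), hg (by decide), hgn 2,
      (hp 1 2).1 (by decide), (hp 2 0).1 (by decide)⟩
  · rintro ⟨a, b, c, hab, hbc, hc, h1, h2⟩
    refine ⟨![a, b, c], Fin.strictMono_iff_lt_succ.2 ?_, ?_, ?_⟩
    · intro i; fin_cases i <;> simpa
    · intro i; fin_cases i <;> simp <;> omega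
    · intro i j; fin_cases i <;> fin_cases j <;> simp <;> omega

lemma containsPat_4321 {π : Equiv.Perm (Fin n)} :
    ContainsPat π [4,3,2,1] ↔ ∃ a b c d, a < b ∧ b < c ∧ c < d ∧ d < n ∧
      natVal π d < natVal π c ∧ natVal π c < natVal π b ∧ natVal π b < natVal π a := by
  rw [containsPat_iff]
  constructor
  · rintro ⟨g, hg, hgn, hp⟩
    exact ⟨g 0, g 1, g 2, g 3, hg (by decide), hg (by decide), hg (by decide), hgn 3,
      (hp 3 2).1 (by decide), (hp 2 1).1 (by decide), (hp 1 0).1 (by decide)⟩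
  · rintro ⟨a, b, c, d, hab, hbc, hcd, hd, h1, h2, h3⟩
    refine ⟨![a, b, c, d], Fin.strictMono_iff_lt_succ.2 ?_, ?_, ?_⟩
    · intro i; fin_cases i <;> simpa
    · intro i; fin_cases i <;> simp <;> omega
    · intro i j; fin_cases i <;> fin_cases j <;> simp <;> omega

lemma containsPat_21543 {π : Equiv.Perm (Fin n)} :
    ContainsPat π [2,1,5,4,3] ↔ ∃ a b c d e, a < b ∧ b < c ∧ c < d ∧ d < e ∧ e < n ∧
      natVal π b < natVal π a ∧ natVal π a < natVal π e ∧ natVal π e < natVal π d ∧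
      natVal π d < natVal π c := by
  rw [containsPat_iff]
  constructor
  · rintro ⟨g, hg, hgn, hp⟩
    exact ⟨g 0, g 1, g 2, g 3, g 4, hg (by decide), hg (by decide), hg (by decide),
      hg (by decide), hgn 4, (hp 1 0).1 (by decide), (hp 0 4).1 (by decide),
      (hp 4 3).1 (by decide), (hp 3 2).1 (by decide)⟩
  · rintro ⟨a, b, c, d, e, hab, hbc, hcd, hde, he, h1, h2, h3, h4⟩
    refine ⟨![a, b, c, d, e], Fin.strictMono_iff_lt_succ.2 ?_, ?_, ?_⟩
    · intro i; fin_cases i <;> simpa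
    · intro i; fin_cases i <;> simp <;> omega
    · intro i j; fin_cases i <;> fin_cases j <;> simp <;> omega

/-- Layered permutations (direct sums of decreasing runs) are characterised this way: an
inversion `(i, j)` lies inside one reversed run, so `π i + i = π j + j`. -/
def IsLayered (π : Equiv.Perm (Fin n)) : Prop :=
  ∀ i j, i < j → j < n → natVal π j < natVal π i → natVal π i + i = natVal π j + j

def DesAt (π : Equiv.Perm (Fin n)) (i : ℕ) : Prop := i + 1 < n ∧ natVal π (i + 1) < natVal π i

/-- Avoiding `231` and `312`, the positions strictly between the two ends of an inversion
carry exactly the values strictly between its two values. -/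
lemma isLayered_of_avoids {π : Equiv.Perm (Fin n)} (h231 : ¬ ContainsPat π [2,3,1])
    (h312 : ¬ ContainsPat π [3,1,2]) : IsLayered π := by
  intro i j hij hj hinv
  have hi : i < n := hij.trans hj
  have hmaps : Set.MapsTo (natVal π) (Icc i j) (Icc (natVal π j) (natVal π i)) := by
    intro l hl
    simp only [coe_Icc, Set.mem_Icc] at hl ⊢
    rcases hl.1.eq_or_lt with rfl | hil
    · omega
    rcases hl.2.eq_or_lt with rfl | hlj
    · omega
    have hne := (natVal_injective π).ne (show l ≠ i by omega)
    have hne' := (natVal_injective π).ne (show l ≠ j by omega)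
    by_contra hout
    rcases (by omega : natVal π i < natVal π l ∨ natVal π l < natVal π j) with h | h
    · exact h231 (containsPat_231.2 ⟨i, l, j, hil, hlj, hj, hinv, h⟩)
    · exact h312 (containsPat_312.2 ⟨i, l, j, hil, hlj, hj, h, hinv⟩)
  have hsurj : Set.SurjOn (natVal π) (Icc i j) (Icc (natVal π j) (natVal π i)) := by
    intro v hv
    simp only [coe_Icc, Set.mem_Icc] at hv
    obtain ⟨p, hp, rfl⟩ := exists_natVal_eq π (lt_of_le_of_lt hv.2 (natVal_lt π hi))
    refine ⟨p, ?_, rfl⟩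
    simp only [coe_Icc, Set.mem_Icc]
    by_contra hout
    rcases hv.1.eq_or_lt with h | h
    · obtain rfl := natVal_injective π h
      omega
    rcases hv.2.eq_or_lt with h' | h'
    · obtain rfl := natVal_injective π h'
      omega
    rcases (by omega : p < i ∨ j < p) with hp' | hp'
    · exact h231 (containsPat_231.2 ⟨p, i, j, hp', hij, hj, h, h'⟩)
    · exact h312 (containsPat_312.2 ⟨i, j, p, hij, hp', hp, h, h'⟩)
  have hcard := card_nbij _ hmaps (natVal_injective π).injOn hsurj
  simp only [Nat.card_Icc] at hcard
  omega

namespace IsLayered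

variable {π : Equiv.Perm (Fin n)} (hπ : IsLayered π)
include hπ

lemma add_eq_add {i j : ℕ} (hij : i < j) (hj : j < n) (hinv : natVal π j < natVal π i) :
    natVal π i + i = natVal π j + j :=
  hπ i j hij hj hinv

lemma not_containsPat_231 : ¬ ContainsPat π [2,3,1] := by
  rw [containsPat_231]
  rintro ⟨a, b, c, hab, hbc, hc, h1, h2⟩
  have := hπ.add_eq_add hbc hc (by omega)
  have := hπ.add_eq_add (hab.trans hbc) hc h1
  omega

lemma not_containsPat_312 : ¬ ContainsPat π [3,1,2] := by
  rw [containsPat_312]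
  rintro ⟨a, b, c, hab, hbc, hc, h1, h2⟩
  have := hπ.add_eq_add hab (hbc.trans hc) (by omega)
  have := hπ.add_eq_add (hab.trans hbc) hc h2
  omega

lemma between_of_inv {i j l : ℕ} (hil : i < l) (hlj : l < j) (hj : j < n)
    (hinv : natVal π j < natVal π i) : natVal π j < natVal π l ∧ natVal π l < natVal π i := by
  have hij := hπ.add_eq_add (hil.trans hlj) hj hinv
  have h1 := (natVal_injective π).ne (show l ≠ j by omega)
  have h2 := (natVal_injective π).ne (show l ≠ i by omega)
  constructor
  · by_contra h
    have := hπ.add_eq_add hil (hlj.trans hj) (by omega)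
    omega
  · by_contra h
    have := hπ.add_eq_add hlj hj (by omega)
    omega

lemma desAt_of_inv {i j l : ℕ} (hil : i ≤ l) (hlj : l < j) (hj : j < n)
    (hinv : natVal π j < natVal π i) : DesAt π l := by
  have hl : natVal π j < natVal π l := by
    rcases hil.eq_or_lt with rfl | hil
    · exact hinv
    · exact (hπ.between_of_inv hil hlj hj hinv).1
  refine ⟨by omega, ?_⟩
  rcases (Nat.succ_le_of_lt hlj).eq_or_lt with h | h
  · rw [show l + 1 = j from h]; exact hl
  · exact (hπ.between_of_inv (Nat.lt_succ_self l) h hj hl).2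

lemma inv_iff_forall_desAt {i j : ℕ} (hij : i < j) (hj : j < n) :
    natVal π j < natVal π i ↔ ∀ l, i ≤ l → l < j → DesAt π l := by
  refine ⟨fun hinv l hil hlj => hπ.desAt_of_inv hil hlj hj hinv, fun hdes => ?_⟩
  induction j, hij using Nat.le_induction with
  | base => exact (hdes i le_rfl (Nat.lt_succ_self i)).2
  | succ j hij ih =>
    exact (hdes j (by omega) (Nat.lt_succ_self j)).2.trans
      (ih (by omega) fun l hil hlj => hdes l hil (by omega))

end IsLayered

noncomputable def descents (π : Equiv.Perm (Fin n)) : Finset ℕ := (range n).filter (DesAt π)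

@[simp]
lemma mem_descents {π : Equiv.Perm (Fin n)} {l : ℕ} : l ∈ descents π ↔ DesAt π l := by
  simp only [descents, mem_filter, mem_range, and_iff_right_iff_imp]
  intro h
  exact Nat.lt_of_succ_lt h.1

lemma descents_subset_range (π : Equiv.Perm (Fin n)) : descents π ⊆ range (n - 1) := by
  intro l hl
  have := (mem_descents.1 hl).1
  rw [mem_range]
  omega

def PairsAtMin (D : Finset ℕ) : Prop := ∀ i ∈ D, ∀ j ∈ D, j + 1 ∈ D → j ≤ i

lemma PairsAtMin.not_triple {D : Finset ℕ} (hD : PairsAtMin D) (l : ℕ) :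
    ¬ (l ∈ D ∧ l + 1 ∈ D ∧ l + 2 ∈ D) := by
  rintro ⟨h0, h1, h2⟩
  have := hD l h0 (l + 1) h1 h2
  omega

lemma containsPat_4321_of_desAt {π : Equiv.Perm (Fin n)} {a : ℕ} (h0 : DesAt π a)
    (h1 : DesAt π (a + 1)) (h2 : DesAt π (a + 2)) : ContainsPat π [4,3,2,1] :=
  containsPat_4321.2 ⟨a, a + 1, a + 2, a + 3, by omega, by omega, by omega, h2.1, h2.2, h1.2, h0.2⟩

namespace IsLayered

variable {π : Equiv.Perm (Fin n)} (hπ : IsLayered π)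
include hπ

lemma pairsAtMin_descents (h4321 : ¬ ContainsPat π [4,3,2,1])
    (h21543 : ¬ ContainsPat π [2,1,5,4,3]) : PairsAtMin (descents π) := by
  simp only [PairsAtMin, mem_descents]
  intro i hi j hj hj1
  by_contra! hij
  rcases (Nat.succ_le_of_lt hij).eq_or_lt with h | h
  · obtain rfl : i + 1 = j := h
    exact h4321 (containsPat_4321_of_desAt hi hj hj1)
  rcases lt_or_gt_of_ne ((natVal_injective π).ne (show i ≠ j + 2 by omega)) with hlt | hgt
  · exact h21543 (containsPat_21543.2
      ⟨i, i + 1, j, j + 1, j + 2, by omega, h, by omega, by omega, hj1.1, hi.2, hlt, hj1.2, hj.2⟩)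
  · have hdes l (hil : i ≤ l) (hl : l < j + 2) := hπ.desAt_of_inv hil hl hj1.1 hgt
    exact h4321 (containsPat_4321_of_desAt (hdes i le_rfl (by omega))
      (hdes (i + 1) (by omega) (by omega)) (hdes (i + 2) (by omega) (by omega)))

variable (hD : PairsAtMin (descents π))
include hD

lemma not_containsPat_4321 : ¬ ContainsPat π [4,3,2,1] := by
  rw [containsPat_4321]
  rintro ⟨a, b, c, d, hab, hbc, hcd, hd, h1, h2, h3⟩
  have hdes l (hal : a ≤ l) (hl : l < d) := mem_descents.2 (hπ.desAt_of_inv hal hl hd (by omega))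
  exact hD.not_triple a ⟨hdes a le_rfl (by omega), hdes (a + 1) (by omega) (by omega),
    hdes (a + 2) (by omega) (by omega)⟩

lemma not_containsPat_21543 : ¬ ContainsPat π [2,1,5,4,3] := by
  rw [containsPat_21543]
  rintro ⟨a, b, c, d, e, hab, hbc, hcd, hde, he, h1, h2, h3, h4⟩
  have hdes l (hcl : c ≤ l) (hl : l < e) := mem_descents.2 (hπ.desAt_of_inv hcl hl he (by omega))
  have ha := mem_descents.2 (hπ.desAt_of_inv le_rfl hab (by omega) h1)
  have := hD a ha (e - 2) (hdes (e - 2) (by omega) (by omega))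
    (by rw [show e - 2 + 1 = e - 1 by omega]; exact hdes (e - 1) (by omega) (by omega))
  omega

end IsLayered

lemma avoidsAll_iff (π : Equiv.Perm (Fin n)) :
    AvoidsAll π [[2,3,1],[3,1,2],[4,3,2,1],[2,1,5,4,3]] ↔
      IsLayered π ∧ PairsAtMin (descents π) := by
  simp only [AvoidsAll, List.mem_cons, List.not_mem_nil, or_false, forall_eq_or_imp, forall_eq]
  constructor
  · rintro ⟨h231, h312, h4321, h21543⟩
    have hπ := isLayered_of_avoids h231 h312
    exact ⟨hπ, hπ.pairsAtMin_descents h4321 h21543⟩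
  · rintro ⟨hπ, hD⟩
    exact ⟨hπ.not_containsPat_231, hπ.not_containsPat_312, hπ.not_containsPat_4321 hD,
      hπ.not_containsPat_21543 hD⟩

lemma val_eq_card_filter_lt (π : Equiv.Perm (Fin n)) (i : Fin n) :
    (π i : ℕ) = #{j | π j < π i} := by
  have : ({j | π j < π i} : Finset (Fin n)) = (Iio (π i)).map π.symm.toEmbedding := by
    ext j
    simp [mem_map_equiv]
  rw [this, card_map, Fin.card_Iio]

lemma eq_of_forall_inv_iff {π σ : Equiv.Perm (Fin n)}
    (h : ∀ i j : Fin n, i < j → (π j < π i ↔ σ j < σ i)) : π = σ := by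
  ext i
  rw [val_eq_card_filter_lt π, val_eq_card_filter_lt σ]
  congr 1
  ext j
  simp only [mem_filter, mem_univ, true_and]
  rcases lt_trichotomy j i with hji | rfl | hij
  · have hπ := π.injective.ne hji.ne
    have hσ := σ.injective.ne hji.ne
    rw [lt_iff_le_and_ne, lt_iff_le_and_ne, ← not_lt, ← not_lt, h j i hji]
    tauto
  · simp
  · exact h i j hij

lemma IsLayered.eq_of_descents_eq {π σ : Equiv.Perm (Fin n)} (hπ : IsLayered π)
    (hσ : IsLayered σ) (h : descents π = descents σ) : π = σ := by
  refine eq_of_forall_inv_iff fun i j hij => ?_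
  have hD l : DesAt π l ↔ DesAt σ l := by rw [← mem_descents, ← mem_descents, h]
  rw [Fin.lt_def, ← natVal_val, ← natVal_val, hπ.inv_iff_forall_desAt hij j.is_lt, Fin.lt_def,
    ← natVal_val, ← natVal_val, hσ.inv_iff_forall_desAt hij j.is_lt]
  simp only [hD]

section Blocks

/-! The maximal runs `[blockStart D i, blockEnd D i]` of consecutive integers linked by elements
of `D` (where `l ∈ D` links `l` to `l + 1`) partition `ℕ`; reversing every run gives the layered
permutation with descent set `D`. -/

variable (D : Finset ℕ)

lemma exists_le_notMem (i : ℕ) : ∃ e, i ≤ e ∧ e ∉ D := by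
  refine ⟨max i (D.sup id + 1), le_max_left _ _, fun h => ?_⟩
  have := le_sup (f := id) h
  simp only [id] at this
  omega

noncomputable def blockEnd (i : ℕ) : ℕ := Nat.find (exists_le_notMem D i)

noncomputable def blockStart (i : ℕ) : ℕ :=
  Nat.find (⟨i, fun _ hil hli => absurd hli (not_lt.2 hil)⟩ : ∃ s, ∀ l, s ≤ l → l < i → l ∈ D)

noncomputable def blockReverse (i : ℕ) : ℕ := blockStart D i + blockEnd D i - i

variable {D} {i j l : ℕ}

lemma le_blockEnd : i ≤ blockEnd D i := (Nat.find_spec (exists_le_notMem D i)).1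

lemma blockEnd_notMem : blockEnd D i ∉ D := (Nat.find_spec (exists_le_notMem D i)).2

lemma mem_of_le_of_lt_blockEnd (hil : i ≤ l) (hl : l < blockEnd D i) : l ∈ D := by
  by_contra h
  exact Nat.find_min _ hl ⟨hil, h⟩

lemma blockStart_le : blockStart D i ≤ i :=
  Nat.find_min' _ fun _ hil hli => absurd hli (not_lt.2 hil)

lemma mem_of_blockStart_le_of_lt (hl : blockStart D i ≤ l) (hli : l < i) : l ∈ D :=
  Nat.find_spec (⟨i, fun _ hil hli => absurd hli (not_lt.2 hil)⟩ :
    ∃ s, ∀ l, s ≤ l → l < i → l ∈ D) l hl hli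

lemma blockStart_eq_zero_or_notMem : blockStart D i = 0 ∨ blockStart D i - 1 ∉ D := by
  by_contra! h
  refine Nat.find_min _ (Nat.sub_one_lt h.1) fun l (hl : blockStart D i - 1 ≤ l) hli => ?_
  rcases (show l = blockStart D i - 1 ∨ blockStart D i ≤ l by omega) with rfl | hl'
  · exact h.2
  · exact mem_of_blockStart_le_of_lt hl' hli

lemma blockEnd_eq {e : ℕ} (hie : i ≤ e) (he : e ∉ D) (hlink : ∀ l, i ≤ l → l < e → l ∈ D) :
    blockEnd D i = e :=
  (Nat.find_eq_iff _).2 ⟨⟨hie, he⟩, fun _ hm h => h.2 (hlink _ h.1 hm)⟩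

lemma blockStart_eq {s : ℕ} (hsi : s ≤ i) (hs : s = 0 ∨ s - 1 ∉ D)
    (hlink : ∀ l, s ≤ l → l < i → l ∈ D) : blockStart D i = s := by
  refine (Nat.find_eq_iff _).2 ⟨hlink, fun m hm h => ?_⟩
  rcases hs with rfl | hs
  · omega
  · exact hs (h (s - 1) (by omega) (by omega))

lemma block_eq_of_mem (hj : blockStart D i ≤ j) (hj' : j ≤ blockEnd D i) :
    blockStart D j = blockStart D i ∧ blockEnd D j = blockEnd D i := by
  have hlink l (hl : blockStart D i ≤ l) (hl' : l < blockEnd D i) : l ∈ D := by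
    rcases lt_or_ge l i with hli | hil
    · exact mem_of_blockStart_le_of_lt hl hli
    · exact mem_of_le_of_lt_blockEnd hil hl'
  exact ⟨blockStart_eq hj blockStart_eq_zero_or_notMem fun l hl hlj => hlink l hl (by omega),
    blockEnd_eq hj' blockEnd_notMem fun l hjl hl => hlink l (by omega) hl⟩

lemma blockReverse_involutive : Function.Involutive (blockReverse D) := by
  intro i
  have hs : blockStart D i ≤ i := blockStart_le
  have he : i ≤ blockEnd D i := le_blockEnd
  obtain ⟨hs', he'⟩ := block_eq_of_mem (D := D) (i := i) (j := blockReverse D i)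
    (by unfold blockReverse; omega) (by unfold blockReverse; omega)
  unfold blockReverse at hs' he' ⊢
  rw [hs', he']
  omega

lemma blockReverse_le_blockEnd : blockReverse D i ≤ blockEnd D i := by
  have : blockStart D i ≤ i := blockStart_le
  unfold blockReverse
  omega

lemma blockStart_le_blockReverse : blockStart D i ≤ blockReverse D i := by
  have : i ≤ blockEnd D i := le_blockEnd
  unfold blockReverse
  omega

lemma blockEnd_lt {n : ℕ} (hD : D ⊆ range (n - 1)) (hi : i < n) : blockEnd D i < n := by
  have : blockEnd D i ≤ n - 1 :=
    Nat.find_min' _ ⟨by omega, fun h => by simpa using hD h⟩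
  omega

end Blocks

variable {D : Finset ℕ}

noncomputable def layeredOfDescents (hD : D ⊆ range (n - 1)) : Equiv.Perm (Fin n) :=
  Function.Involutive.toPerm
    (fun x => ⟨blockReverse D x, blockReverse_le_blockEnd.trans_lt (blockEnd_lt hD x.is_lt)⟩)
    fun x => Fin.ext (blockReverse_involutive (D := D) x)

lemma natVal_layeredOfDescents (hD : D ⊆ range (n - 1)) {i : ℕ} (hi : i < n) :
    natVal (layeredOfDescents hD) i = blockReverse D i := by
  rw [natVal_of_lt _ hi]
  rfl

lemma isLayered_layeredOfDescents (hD : D ⊆ range (n - 1)) :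
    IsLayered (layeredOfDescents hD) := by
  intro i j hij hj hinv
  rw [natVal_layeredOfDescents hD hj, natVal_layeredOfDescents hD (hij.trans hj)] at hinv ⊢
  have hsi : blockStart D i ≤ i := blockStart_le
  have hei : i ≤ blockEnd D i := le_blockEnd
  have hji : j ≤ blockEnd D i := by
    by_contra! hej
    have hsj : blockEnd D i < blockStart D j := by
      by_contra! h
      exact blockEnd_notMem (mem_of_blockStart_le_of_lt h hej)
    have := blockStart_le_blockReverse (D := D) (i := j)
    have := blockReverse_le_blockEnd (D := D) (i := i)
    omega
  obtain ⟨hs, he⟩ := block_eq_of_mem (D := D) (by omega) hji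
  unfold blockReverse
  rw [hs, he]
  omega

lemma descents_layeredOfDescents (hD : D ⊆ range (n - 1)) :
    descents (layeredOfDescents hD) = D := by
  ext l
  rw [mem_descents, DesAt]
  constructor
  · rintro ⟨hl, hdes⟩
    rw [natVal_layeredOfDescents hD hl, natVal_layeredOfDescents hD (by omega)] at hdes
    by_contra hlD
    have he : blockEnd D l = l := blockEnd_eq le_rfl hlD fun _ h h' => absurd h' (not_lt.2 h)
    have hs : blockStart D (l + 1) = l + 1 :=
      blockStart_eq le_rfl (Or.inr hlD) fun _ h h' => absurd h' (not_lt.2 h)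
    have := blockStart_le_blockReverse (D := D) (i := l + 1)
    have := blockReverse_le_blockEnd (D := D) (i := l)
    omega
  · intro hlD
    have hl : l + 1 < n := by have := mem_range.1 (hD hlD); omega
    refine ⟨hl, ?_⟩
    rw [natVal_layeredOfDescents hD hl, natVal_layeredOfDescents hD (by omega)]
    have hsl : blockStart D l ≤ l := blockStart_le
    have hel : l + 1 ≤ blockEnd D l :=
      lt_of_le_of_ne le_blockEnd fun h => blockEnd_notMem (h ▸ hlD)
    obtain ⟨hs, he⟩ := block_eq_of_mem (D := D) (j := l + 1) (by omega) hel
    unfold blockReverse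
    rw [hs, he]
    omega

def invWeight (D : Finset ℕ) : ℕ := #D + #(D.filter (· + 1 ∈ D))

lemma IsLayered.inv_iff_of_not_triple {π : Equiv.Perm (Fin n)} (hπ : IsLayered π)
    (hT : ∀ l, ¬ (DesAt π l ∧ DesAt π (l + 1) ∧ DesAt π (l + 2))) {i j : ℕ} (hij : i < j)
    (hj : j < n) :
    natVal π j < natVal π i ↔
      (j = i + 1 ∧ DesAt π i) ∨ (j = i + 2 ∧ DesAt π i ∧ DesAt π (i + 1)) := by
  rw [hπ.inv_iff_forall_desAt hij hj]
  constructor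
  · intro h
    rcases (by omega : j = i + 1 ∨ j = i + 2 ∨ i + 3 ≤ j) with rfl | rfl | hj3
    · exact Or.inl ⟨rfl, h i le_rfl (by omega)⟩
    · exact Or.inr ⟨rfl, h i le_rfl (by omega), h (i + 1) (by omega) (by omega)⟩
    · exact absurd ⟨h i le_rfl (by omega), h (i + 1) (by omega) (by omega),
        h (i + 2) (by omega) (by omega)⟩ (hT i)
  · rintro (⟨rfl, h⟩ | ⟨rfl, h, h'⟩) l hil hlj
    · obtain rfl : l = i := by omega
      exact h
    · rcases (by omega : l = i ∨ l = i + 1) with rfl | rfl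
      · exact h
      · exact h'

/-- Without three consecutive descents, the inversions of a layered permutation are the pairs
`(i, i + 1)` at its descents and `(i, i + 2)` at its double descents. -/
lemma IsLayered.invNum_eq {π : Equiv.Perm (Fin n)} (hπ : IsLayered π)
    (hT : ∀ l, ¬ (DesAt π l ∧ DesAt π (l + 1) ∧ DesAt π (l + 2))) :
    invNum π = invWeight (descents π) := by
  have hinj (c : ℕ) : Function.Injective fun i : ℕ => (i, i + c) :=
    fun a b h => (Prod.ext_iff.1 h).1
  have hdisj : Disjoint ((descents π).image fun i => (i, i + 1))
      (((descents π).filter (· + 1 ∈ descents π)).image fun i => (i, i + 2)) := by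
    simp only [disjoint_left, mem_image]
    rintro _ ⟨a, -, rfl⟩ ⟨b, -, h⟩
    simp only [Prod.ext_iff] at h
    omega
  have hmem a b : (a, b) ∈ ((descents π).image fun i => (i, i + 1)) ∪
      (((descents π).filter (· + 1 ∈ descents π)).image fun i => (i, i + 2)) ↔
      a < b ∧ b < n ∧ natVal π b < natVal π a := by
    simp only [mem_union, mem_image, mem_filter, mem_descents, Prod.ext_iff]
    constructor
    · rintro (⟨i, hi, rfl, rfl⟩ | ⟨i, ⟨hi, hi'⟩, rfl, rfl⟩)
      · exact ⟨by omega, hi⟩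
      · exact ⟨by omega, hi'.1,
          (hπ.inv_iff_of_not_triple hT (by omega) hi'.1).2 (Or.inr ⟨rfl, hi, hi'⟩)⟩
    · rintro ⟨hab, hb, hinv⟩
      rcases (hπ.inv_iff_of_not_triple hT hab hb).1 hinv with ⟨rfl, h⟩ | ⟨rfl, h, h'⟩
      · exact Or.inl ⟨a, h, rfl, rfl⟩
      · exact Or.inr ⟨a, ⟨h, h'⟩, rfl, rfl⟩
  rw [invWeight, ← card_image_of_injective _ (hinj 1), ← card_image_of_injective _ (hinj 2),
    ← card_union_of_disjoint hdisj, invNum]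
  refine card_nbij (fun p => ((p.1 : ℕ), (p.2 : ℕ))) (fun p hp => ?_)
    (fun p _ q _ h => ?_) fun ⟨a, b⟩ hab => ?_
  · simp only [coe_filter, mem_univ, true_and, Set.mem_ofPred_eq, Fin.lt_def] at hp
    rw [mem_coe, hmem]
    exact ⟨hp.1, p.2.is_lt, by simpa using hp.2⟩
  · simp only [Prod.ext_iff, Fin.val_inj] at h
    exact Prod.ext h.1 h.2
  · obtain ⟨hab, hb, hinv⟩ := (hmem a b).1 hab
    refine ⟨(⟨a, hab.trans hb⟩, ⟨b, hb⟩), ?_, rfl⟩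
    simp only [coe_filter, mem_univ, true_and, Set.mem_ofPred_eq, Fin.lt_def]
    exact ⟨hab, by simpa [natVal_of_lt π hb, natVal_of_lt π (hab.trans hb)] using hinv⟩

noncomputable def admissibleSets (n k : ℕ) : Finset (Finset ℕ) :=
  (range (n - 1)).powerset.filter fun D => PairsAtMin D ∧ invWeight D = k

lemma IsLayered.invNum_eq_of_pairsAtMin {π : Equiv.Perm (Fin n)}
    (hπ : IsLayered π) (hD : PairsAtMin (descents π)) : invNum π = invWeight (descents π) :=
  hπ.invNum_eq fun l h => hD.not_triple l (by simpa only [mem_descents] using h)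

/-- The descent set is a bijection from the permutations in question onto the admissible sets. -/
theorem ncard_avoiders_eq_card_admissibleSets (n k : ℕ) :
    {π : Equiv.Perm (Fin n) |
        AvoidsAll π [[2,3,1],[3,1,2],[4,3,2,1],[2,1,5,4,3]] ∧ invNum π = k}.ncard =
      #(admissibleSets n k) := by
  rw [← Set.ncard_coe_finset]
  refine Set.ncard_congr (fun π _ => descents π) ?_ ?_ ?_
  · rintro π ⟨hav, hk⟩
    obtain ⟨hπ, hD⟩ := (avoidsAll_iff π).1 hav
    simp only [admissibleSets, coe_filter, mem_powerset, Set.mem_ofPred_eq]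
    exact ⟨descents_subset_range π, hD, hπ.invNum_eq_of_pairsAtMin hD ▸ hk⟩
  · rintro π σ ⟨hπ, -⟩ ⟨hσ, -⟩ h
    exact ((avoidsAll_iff π).1 hπ).1.eq_of_descents_eq ((avoidsAll_iff σ).1 hσ).1 h
  · intro D hD
    simp only [admissibleSets, coe_filter, mem_powerset, Set.mem_ofPred_eq] at hD
    obtain ⟨hsub, hPM, hk⟩ := hD
    have hπ := isLayered_layeredOfDescents hsub
    have hdes := descents_layeredOfDescents hsub
    rw [← hdes] at hPM
    refine ⟨layeredOfDescents hsub, ⟨(avoidsAll_iff _).2 ⟨hπ, hPM⟩, ?_⟩, hdes⟩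
    rw [hπ.invNum_eq_of_pairsAtMin hPM, hdes, hk]

section Sparse

def IsSparse (E : Finset ℕ) : Prop := ∀ i ∈ E, i + 1 ∉ E

noncomputable def sparseSubsets (s : Finset ℕ) (j : ℕ) : Finset (Finset ℕ) :=
  (s.powersetCard j).filter IsSparse

lemma mem_sparseSubsets {s E : Finset ℕ} {j : ℕ} :
    E ∈ sparseSubsets s j ↔ E ⊆ s ∧ #E = j ∧ IsSparse E := by
  rw [sparseSubsets, mem_filter, mem_powersetCard, and_assoc]

lemma card_sparseSubsets_zero (s : Finset ℕ) : #(sparseSubsets s 0) = 1 := by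
  rw [sparseSubsets, powersetCard_zero, filter_singleton, if_pos (by simp [IsSparse]),
    card_singleton]

lemma card_sparseSubsets_range_zero_succ (j : ℕ) : #(sparseSubsets (range 0) (j + 1)) = 0 := by
  simp [sparseSubsets]

lemma filter_notMem_sparseSubsets_range (m j : ℕ) :
    (sparseSubsets (range (m + 1)) j).filter (m ∉ ·) = sparseSubsets (range m) j := by
  ext E
  simp only [mem_filter, mem_sparseSubsets, range_add_one]
  constructor
  · rintro ⟨⟨hsub, h⟩, hm⟩
    exact ⟨(subset_insert_iff_of_notMem hm).1 hsub, h⟩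
  · rintro ⟨hsub, h⟩
    exact ⟨⟨hsub.trans (subset_insert _ _), h⟩, fun hm => by simpa using hsub hm⟩

/-- If the largest candidate `m` is chosen, then `m - 1` is not. -/
lemma card_filter_mem_sparseSubsets_range (m j : ℕ) :
    #((sparseSubsets (range (m + 1)) (j + 1)).filter (m ∈ ·)) =
      #(sparseSubsets (range (m - 1)) j) := by
  refine card_nbij' (fun E => E.erase m) (insert m) (fun E hE => ?_) (fun E hE => ?_)
    (fun E hE => ?_) fun E hE => ?_
  · simp only [coe_filter, Set.mem_ofPred_eq, mem_sparseSubsets] at hE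
    obtain ⟨⟨hsub, hcard, hsp⟩, hm⟩ := hE
    simp only [mem_coe, mem_sparseSubsets]
    refine ⟨fun x hx => ?_, by rw [card_erase_of_mem hm, hcard]; rfl,
      fun x hx hx1 => hsp x (mem_of_mem_erase hx) (mem_of_mem_erase hx1)⟩
    have hxm := ne_of_mem_erase hx
    have hx' := mem_range.1 (hsub (mem_of_mem_erase hx))
    rw [mem_range]
    by_contra hle
    obtain rfl : x + 1 = m := by omega
    exact hsp x (mem_of_mem_erase hx) hm
  · simp only [mem_coe, mem_sparseSubsets] at hE
    obtain ⟨hsub, hcard, hsp⟩ := hE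
    have hlt x (hx : x ∈ E) : x + 1 < m := by have := mem_range.1 (hsub hx); omega
    have hmE : m ∉ E := fun h => by have := hlt m h; omega
    simp only [coe_filter, Set.mem_ofPred_eq, mem_sparseSubsets, mem_insert_self, and_true]
    refine ⟨insert_subset (self_mem_range_succ m) fun x hx => mem_range.2 (by
      have := hlt x hx; omega), by rw [card_insert_of_notMem hmE, hcard], fun x hx hx1 => ?_⟩
    rw [mem_insert] at hx hx1
    rcases hx with rfl | hx
    · rcases hx1 with h | h
      · omega
      · have := hlt _ h; omega
    · rcases hx1 with h | h
      · have := hlt x hx; omega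
      · exact hsp x hx h
  · simp only [coe_filter, Set.mem_ofPred_eq] at hE
    exact insert_erase hE.2
  · simp only [mem_coe, mem_sparseSubsets] at hE
    exact erase_insert fun h => by have := mem_range.1 (hE.1 h); omega

lemma card_sparseSubsets_range_succ_succ (m j : ℕ) :
    #(sparseSubsets (range (m + 1)) (j + 1)) =
      #(sparseSubsets (range m) (j + 1)) + #(sparseSubsets (range (m - 1)) j) := by
  rw [← card_filter_add_card_filter_not (p := (m ∉ ·)), filter_notMem_sparseSubsets_range]
  simp only [not_not]
  rw [card_filter_mem_sparseSubsets_range]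

lemma card_sparseSubsets_range : ∀ m j, #(sparseSubsets (range m) j) = (m + 1 - j).choose j
  | _, 0 => by rw [card_sparseSubsets_zero, Nat.choose_zero_right]
  | 0, j + 1 => by rw [card_sparseSubsets_range_zero_succ, Nat.choose_eq_zero_of_lt (by omega)]
  | m + 1, j + 1 => by
    rw [card_sparseSubsets_range_succ_succ, card_sparseSubsets_range m (j + 1),
      card_sparseSubsets_range (m - 1) j]
    rcases le_or_gt j m with h | h
    · obtain rfl | hm := Nat.eq_zero_or_pos m
      · obtain rfl : j = 0 := by omega
        rfl
      rw [show m + 1 + 1 - (j + 1) = m - j + 1 by omega, Nat.choose_succ_succ', add_comm,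
        show m + 1 - (j + 1) = m - j by omega, show m - 1 + 1 - j = m - j by omega]
    · rw [Nat.choose_eq_zero_of_lt (by omega : m + 1 - (j + 1) < j + 1),
        Nat.choose_eq_zero_of_lt (by omega : m - 1 + 1 - j < j),
        Nat.choose_eq_zero_of_lt (by omega : m + 1 + 1 - (j + 1) < j + 1)]
termination_by m => m

lemma isSparse_map_addLeft {E : Finset ℕ} (c : ℕ) :
    IsSparse (E.map (addLeftEmbedding c)) ↔ IsSparse E := by
  simp only [IsSparse, mem_map, addLeftEmbedding_apply, forall_exists_index, and_imp,
    forall_apply_eq_imp_iff₂]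
  refine forall₂_congr fun x _ => not_congr ⟨fun ⟨y, hy, h⟩ => ?_, fun h => ⟨x + 1, h, rfl⟩⟩
  obtain rfl : y = x + 1 := by omega
  exact hy

lemma card_sparseSubsets_Ico (a b j : ℕ) :
    #(sparseSubsets (Ico a b) j) = #(sparseSubsets (range (b - a)) j) := by
  have hIco : Ico a b = (range (b - a)).map (addLeftEmbedding a) := by
    ext x
    simp only [mem_Ico, mem_map, mem_range, addLeftEmbedding_apply]
    exact ⟨fun h => ⟨x - a, by omega, by omega⟩, fun ⟨y, hy, h⟩ => by omega⟩
  rw [hIco, sparseSubsets, powersetCard_map, filter_map, card_map, sparseSubsets]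
  congr 2
  ext E
  exact isSparse_map_addLeft a

/-- The `m`-th term counts the sparse `(j + 1)`-subsets of `range N` with least element `m`. -/
lemma sum_card_sparseSubsets_range (N j : ℕ) :
    ∑ m ∈ range N, #(sparseSubsets (range (N - 2 - m)) j) =
      #(sparseSubsets (range N) (j + 1)) := by
  induction N with
  | zero => rw [sum_range_zero, card_sparseSubsets_range_zero_succ]
  | succ N ih =>
    rw [sum_range_succ', card_sparseSubsets_range_succ_succ, ← ih, Nat.sub_zero,
      show N + 1 - 2 = N - 1 by omega]
    congr 1
    exact sum_congr rfl fun m _ => by rw [show N - 1 - (m + 1) = N - 2 - m by omega]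

end Sparse

section Admissible

lemma IsSparse.pairsAtMin {D : Finset ℕ} (hD : IsSparse D) : PairsAtMin D :=
  fun _ _ j hj hj1 => absurd hj1 (hD j hj)

lemma IsSparse.invWeight_eq {D : Finset ℕ} (hD : IsSparse D) : invWeight D = #D := by
  rw [invWeight, filter_false_of_mem fun j hj => hD j hj, card_empty, add_zero]

lemma filter_isSparse_admissibleSets (n k : ℕ) :
    (admissibleSets n k).filter IsSparse = sparseSubsets (range (n - 1)) k := by
  ext D
  simp only [admissibleSets, mem_filter, mem_powerset, mem_sparseSubsets]
  constructor
  · rintro ⟨⟨hsub, -, hk⟩, hsp⟩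
    exact ⟨hsub, hsp.invWeight_eq ▸ hk, hsp⟩
  · rintro ⟨hsub, hk, hsp⟩
    exact ⟨⟨hsub, hsp.pairsAtMin, hsp.invWeight_eq ▸ hk⟩, hsp⟩

variable {m : ℕ} {E : Finset ℕ}

lemma adjacent_mem_insert_insert_iff (hE : ∀ x ∈ E, m + 3 ≤ x) (hsp : IsSparse E) {x : ℕ} :
    x ∈ insert m (insert (m + 1) E) ∧ x + 1 ∈ insert m (insert (m + 1) E) ↔ x = m := by
  simp only [mem_insert]
  constructor
  · rintro ⟨hx | hx | hx, hx1 | hx1 | hx1⟩ <;> first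
      | omega
      | (have := hE _ hx; omega)
      | (have := hE _ hx1; omega)
      | exact absurd hx1 (hsp x hx)
  · rintro rfl
    simp

lemma pairsAtMin_insert_insert (hE : ∀ x ∈ E, m + 3 ≤ x) (hsp : IsSparse E) :
    PairsAtMin (insert m (insert (m + 1) E)) := by
  intro i hi j hj hj1
  obtain rfl := (adjacent_mem_insert_insert_iff hE hsp).1 ⟨hj, hj1⟩
  simp only [mem_insert] at hi
  rcases hi with rfl | rfl | hi
  · rfl
  · omega
  · have := hE i hi; omega

lemma notMem_insert_of_forall_le (hE : ∀ x ∈ E, m + 3 ≤ x) :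
    m ∉ insert (m + 1) E ∧ m + 1 ∉ E := by
  simp only [mem_insert, not_or]
  exact ⟨⟨by omega, fun h => by have := hE _ h; omega⟩, fun h => by have := hE _ h; omega⟩

lemma erase_erase_insert_insert (hE : ∀ x ∈ E, m + 3 ≤ x) :
    ((insert m (insert (m + 1) E)).erase m).erase (m + 1) = E := by
  obtain ⟨hm, hm1⟩ := notMem_insert_of_forall_le hE
  rw [erase_insert hm, erase_insert hm1]

lemma invWeight_insert_insert (hE : ∀ x ∈ E, m + 3 ≤ x) (hsp : IsSparse E) :
    invWeight (insert m (insert (m + 1) E)) = #E + 3 := by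
  obtain ⟨hm, hm1⟩ := notMem_insert_of_forall_le hE
  have hpairs : (insert m (insert (m + 1) E)).filter (· + 1 ∈ insert m (insert (m + 1) E)) =
      {m} := by
    ext x
    rw [mem_filter, mem_singleton, adjacent_mem_insert_insert_iff hE hsp]
  rw [invWeight, hpairs, card_insert_of_notMem hm, card_insert_of_notMem hm1, card_singleton]

lemma PairsAtMin.eq_insert_insert {D : Finset ℕ} (hD : PairsAtMin D) (hm : m ∈ D)
    (hm1 : m + 1 ∈ D) :
    (∀ x ∈ (D.erase m).erase (m + 1), m + 3 ≤ x) ∧ IsSparse ((D.erase m).erase (m + 1)) ∧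
      insert m (insert (m + 1) ((D.erase m).erase (m + 1))) = D := by
  have hE x (hx : x ∈ (D.erase m).erase (m + 1)) : m + 3 ≤ x := by
    obtain ⟨hx1, hx0, hxD⟩ : x ≠ m + 1 ∧ x ≠ m ∧ x ∈ D := by simpa using hx
    have := hD x hxD m hm hm1
    rcases (by omega : x = m + 2 ∨ m + 3 ≤ x) with rfl | h
    · have := hD m hm (m + 1) hm1 hxD
      omega
    · exact h
  refine ⟨hE, fun x hx hx1 => ?_, ?_⟩
  · have := hD m hm x (mem_of_mem_erase (mem_of_mem_erase hx))
      (mem_of_mem_erase (mem_of_mem_erase hx1))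
    have := hE x hx
    omega
  · rw [insert_erase (mem_erase.2 ⟨by omega, hm1⟩), insert_erase hm]

/-- An admissible set with two adjacent elements is `{m, m + 1} ∪ E` for a sparse `E` lying
above `m + 2`. -/
lemma card_filter_not_isSparse_admissibleSets (n k : ℕ) (hk : 3 ≤ k) :
    #((admissibleSets n k).filter (¬ IsSparse ·)) =
      ∑ m ∈ range (n - 2), #(sparseSubsets (Ico (m + 3) (n - 1)) (k - 3)) := by
  rw [← card_sigma]
  symm
  refine card_bij (fun p _ => insert p.1 (insert (p.1 + 1) p.2)) ?_ ?_ ?_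
  · rintro ⟨m, E⟩ hp
    simp only [mem_sigma, mem_range, mem_sparseSubsets] at hp
    obtain ⟨hm, hsub, hcard, hsp⟩ := hp
    have hE x (hx : x ∈ E) : m + 3 ≤ x := (mem_Ico.1 (hsub hx)).1
    simp only [admissibleSets, mem_filter, mem_powerset]
    refine ⟨⟨insert_subset (mem_range.2 (by omega)) (insert_subset (mem_range.2 (by omega))
      fun x hx => mem_range.2 (mem_Ico.1 (hsub hx)).2), pairsAtMin_insert_insert hE hsp,
      by rw [invWeight_insert_insert hE hsp]; omega⟩, fun h => ?_⟩
    exact h m (mem_insert_self _ _) (mem_insert_of_mem (mem_insert_self _ _))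
  · rintro ⟨m, E⟩ hp ⟨m', E'⟩ hp' h
    simp only [mem_sigma, mem_range, mem_sparseSubsets] at hp hp'
    have hE x (hx : x ∈ E) : m + 3 ≤ x := (mem_Ico.1 (hp.2.1 hx)).1
    have hE' x (hx : x ∈ E') : m' + 3 ≤ x := (mem_Ico.1 (hp'.2.1 hx)).1
    dsimp only at h
    obtain rfl : m = m' := by
      rw [← adjacent_mem_insert_insert_iff hE' hp'.2.2.2, ← h,
        adjacent_mem_insert_insert_iff hE hp.2.2.2]
    obtain rfl : E = E' := by
      rw [← erase_erase_insert_insert hE, h, erase_erase_insert_insert hE']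
    rfl
  · intro D hD
    simp only [admissibleSets, mem_filter, mem_powerset, IsSparse, not_forall, not_not] at hD
    obtain ⟨⟨hsub, hPM, hk⟩, m, hm, hm1⟩ := hD
    obtain ⟨hE, hsp, hD⟩ := hPM.eq_insert_insert hm hm1
    refine ⟨⟨m, (D.erase m).erase (m + 1)⟩, ?_, hD⟩
    rw [← hD, invWeight_insert_insert hE hsp] at hk
    simp only [mem_sigma, mem_range, mem_sparseSubsets]
    have := mem_range.1 (hsub hm1)
    refine ⟨by omega, fun x hx => mem_Ico.2 ⟨hE x hx, ?_⟩, by omega, hsp⟩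
    exact mem_range.1 (hsub (mem_of_mem_erase (mem_of_mem_erase hx)))

end Admissible

lemma card_admissibleSets (n k : ℕ) (hk : 3 ≤ k) :
    #(admissibleSets n k) =
      #(sparseSubsets (range (n - 1)) k) + #(sparseSubsets (range (n - 2)) (k - 2)) := by
  rw [← card_filter_add_card_filter_not (p := IsSparse), filter_isSparse_admissibleSets,
    card_filter_not_isSparse_admissibleSets n k hk, show k - 2 = k - 3 + 1 by omega,
    ← sum_card_sparseSubsets_range]
  congr 1
  refine sum_congr rfl fun m _ => ?_
  rw [card_sparseSubsets_Ico, show n - 1 - (m + 3) = n - 2 - 2 - m by omega]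

lemma C_natCast_sub (a b c : ℕ) (hc : 0 < c) : C ((a : ℤ) - b) c = ((a - b).choose c : ℕ) := by
  unfold _root_.C
  split_ifs with h
  · rw [← Nat.cast_sub (by omega : b ≤ a), Int.toNat_natCast, Int.toNat_natCast]
  · rw [Nat.choose_eq_zero_of_lt (by omega), Nat.cast_zero]

end LayeredAvoidance

theorem stmt10 (n k : ℕ) (hk : 3 ≤ k) (hn : 1 ≤ n) :
    ({π : Equiv.Perm (Fin n) | AvoidsAll π [[2,3,1],[3,1,2],[4,3,2,1],[2,1,5,4,3]] ∧ invNum π = k}.ncard : ℤ) =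
      C ((n : ℤ) - k) k + C ((n : ℤ) - k + 1) ((k : ℤ) - 2) := by
  open LayeredAvoidance in
  rw [ncard_avoiders_eq_card_admissibleSets, card_admissibleSets n k hk,
    card_sparseSubsets_range, card_sparseSubsets_range,
    show (n : ℤ) - k + 1 = ((n + 1 : ℕ) : ℤ) - k by push_cast; ring,
    show (k : ℤ) - 2 = ((k - 2 : ℕ) : ℤ) by omega, C_natCast_sub _ _ _ (by omega),
    C_natCast_sub _ _ _ (by omega), show n - 1 + 1 - k = n - k by omega,
    show n - 2 + 1 - (k - 2) = n + 1 - k by omega, Nat.cast_add]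
end

section
/- For n ≥ 1 and k ≥ 0, the number of permutations of length n in Av(312, 321, 1342) with exactly k inversions equals the sum over ℓ from 1 to n of C(n-k-1, k-ℓ+1). -/
open Finset MvPolynomial
open scoped Classical

/-! Avoiding 312 and 321 means exactly that `π i ≤ i + 1` for all `i`. Such a permutation is a
direct sum of cycles `2 3 ⋯ k 1`, so it is determined by its set `A = {i | π i = i + 1}`, which
can be any subset of `{0, …, n - 2}`; each `i ∈ A` is the left end of exactly one inversion and
no other position is, hence `inv π = #A`. Avoiding 1342 as well says that two consecutive
elements of `A` force all smaller numbers into `A`. Splitting at the first gap `a` of `A`, the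
set is `{0, …, a - 1}` followed, beyond `a`, by a subset of `{a + 1, …, n - 2}` without two
consecutive elements; there are `C(n - k - 1, k - a)` of those, and `ℓ = a + 1` in the
formula. -/

def IsSparse (T : Finset ℕ) : Prop := ∀ x ∈ T, x + 1 ∉ T

noncomputable def sparseSets (m j : ℕ) : Finset (Finset ℕ) :=
  (powersetCard j (range m)).filter IsSparse

lemma mem_sparseSets {m j : ℕ} {T : Finset ℕ} :
    T ∈ sparseSets m j ↔ T ⊆ range m ∧ #T = j ∧ IsSparse T := by
  simp [sparseSets, and_assoc]

lemma sparseSets_of_le_one {m : ℕ} (hm : m ≤ 1) (j : ℕ) :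
    sparseSets m j = powersetCard j (range m) := by
  refine filter_true_of_mem fun T hT x hx hx1 => ?_
  have hTm := (mem_powersetCard.1 hT).1
  have := mem_range.1 (hTm hx)
  have := mem_range.1 (hTm hx1)
  omega

lemma filter_notMem_sparseSets (m j : ℕ) :
    (sparseSets (m + 2) j).filter (m + 1 ∉ ·) = sparseSets (m + 1) j := by
  ext T
  simp only [mem_filter, mem_sparseSets, subset_iff, mem_range]
  constructor
  · rintro ⟨⟨hT, hc, hs⟩, hm⟩
    refine ⟨fun x hx => ?_, hc, hs⟩
    have := hT hx
    have : x ≠ m + 1 := fun h => hm (h ▸ hx)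
    omega
  · rintro ⟨hT, hc, hs⟩
    exact ⟨⟨fun x hx => (hT hx).trans (by omega), hc, hs⟩, fun h => by simpa using hT h⟩

lemma card_filter_mem_sparseSets (m j : ℕ) :
    #((sparseSets (m + 2) (j + 1)).filter (m + 1 ∈ ·)) = #(sparseSets m j) := by
  refine card_nbij' (fun T => T.erase (m + 1)) (insert (m + 1)) (fun T hT => ?_) (fun T hT => ?_)
    (fun T hT => insert_erase (mem_filter.1 hT).2) (fun T hT => erase_insert fun h => ?_)
  · simp only [mem_coe, mem_filter, mem_sparseSets] at hT ⊢
    obtain ⟨⟨hT, hc, hs⟩, hm⟩ := hT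
    refine ⟨fun x hx => ?_, by rw [card_erase_of_mem hm, hc]; rfl, fun x hx h => ?_⟩
    · obtain ⟨hxm, hx⟩ := mem_erase.1 hx
      have := mem_range.1 (hT hx)
      have : x ≠ m := fun h => hs x hx (h ▸ hm)
      exact mem_range.2 (by omega)
    · exact hs x (mem_of_mem_erase hx) (mem_of_mem_erase h)
  · simp only [mem_coe, mem_filter, mem_sparseSets] at hT ⊢
    obtain ⟨hT, hc, hs⟩ := hT
    have hlt : ∀ x ∈ T, x < m := fun x hx => mem_range.1 (hT hx)
    refine ⟨⟨?_, ?_, fun x hx h => ?_⟩, mem_insert_self _ _⟩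
    · exact insert_subset (by simp) (hT.trans (range_subset_range.2 (by omega)))
    · rw [card_insert_of_notMem fun h => by have := hlt _ h; omega, hc]
    · rcases mem_insert.1 hx with rfl | hx
      · have := hlt _ ((mem_insert.1 h).resolve_left (by omega)); omega
      · rcases mem_insert.1 h with h | h
        · have := hlt _ hx; omega
        · exact hs x hx h
  · have := mem_range.1 ((mem_sparseSets.1 hT).1 h); omega

lemma card_sparseSets_succ_succ (m j : ℕ) :
    #(sparseSets (m + 2) (j + 1)) = #(sparseSets (m + 1) (j + 1)) + #(sparseSets m j) := by
  rw [← card_filter_add_card_filter_not (m + 1 ∈ ·), card_filter_mem_sparseSets,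
    filter_notMem_sparseSets, add_comm]

theorem card_sparseSets : ∀ m j : ℕ, #(sparseSets m j) = (m + 1 - j).choose j
  | 0, j => by rw [sparseSets_of_le_one zero_le_one]; rcases j with _ | j <;> simp
  | 1, j => by
    rw [sparseSets_of_le_one le_rfl]
    rcases j with _ | _ | j <;> simp [Nat.choose_eq_zero_of_lt]
  | m + 2, 0 => by simp [sparseSets, filter_singleton, IsSparse]
  | m + 2, j + 1 => by
    rw [card_sparseSets_succ_succ, card_sparseSets (m + 1), card_sparseSets m]
    rcases Nat.lt_or_ge (m + 1) j with h | h
    · rw [Nat.choose_eq_zero_of_lt (by omega), Nat.choose_eq_zero_of_lt (by omega),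
        Nat.choose_eq_zero_of_lt (by omega)]
    · rw [show m + 2 + 1 - (j + 1) = m + 1 - j + 1 by omega,
        show m + 1 + 1 - (j + 1) = m + 1 - j by omega,
        Nat.choose_succ_succ, add_comm]

def RunClosed (S : Finset ℕ) : Prop := ∀ i, i + 1 ∈ S → i + 2 ∈ S → i ∈ S

theorem RunClosed.range_subset {S : Finset ℕ} (hS : RunClosed S) :
    ∀ {x : ℕ}, x ∈ S → x + 1 ∈ S → range (x + 2) ⊆ S
  | 0, h0, h1 => fun y hy => by
    rcases Nat.lt_succ_iff_lt_or_eq.1 (mem_range.1 hy) with h | rfl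
    · rwa [Nat.lt_one_iff.1 h]
    · exact h1
  | x + 1, h0, h1 => by
    rw [range_add_one]
    exact insert_subset h1 (hS.range_subset (hS x h0 h1) h0)

noncomputable def runClosedSets (m k : ℕ) : Finset (Finset ℕ) :=
  (powersetCard k (range m)).filter RunClosed

noncomputable def firstGap (S : Finset ℕ) : ℕ := Nat.find S.exists_notMem

lemma firstGap_eq_iff {S : Finset ℕ} {a : ℕ} :
    firstGap S = a ↔ a ∉ S ∧ ∀ p < a, p ∈ S := by
  simp [firstGap, Nat.find_eq_iff]

lemma firstGap_le_card (S : Finset ℕ) : firstGap S ≤ #S := by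
  simpa using card_le_card fun p hp => (firstGap_eq_iff.1 rfl).2 p (mem_range.1 hp)

def rangeUnionShift (a : ℕ) (T : Finset ℕ) : Finset ℕ :=
  range a ∪ T.map (addRightEmbedding (a + 1))

lemma mem_rangeUnionShift {a x : ℕ} {T : Finset ℕ} :
    x ∈ rangeUnionShift a T ↔ x < a ∨ a < x ∧ x - (a + 1) ∈ T := by
  simp only [rangeUnionShift, mem_union, mem_range, mem_map, addRightEmbedding_apply]
  constructor
  · rintro (h | ⟨y, hy, rfl⟩)
    · exact Or.inl h
    · exact Or.inr ⟨by omega, by simpa using hy⟩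
  · rintro (h | ⟨h, hx⟩)
    · exact Or.inl h
    · exact Or.inr ⟨_, hx, by omega⟩

lemma card_rangeUnionShift (a : ℕ) (T : Finset ℕ) : #(rangeUnionShift a T) = a + #T := by
  rw [rangeUnionShift, card_union_of_disjoint, card_range, card_map]
  exact disjoint_left.2 fun x hx hx' => by
    obtain ⟨y, -, rfl⟩ := mem_map.1 hx'
    simp only [addRightEmbedding_apply, mem_range] at hx; omega

noncomputable def shiftDown (a : ℕ) (S : Finset ℕ) : Finset ℕ :=
  S.preimage (· + (a + 1)) (add_left_injective _).injOn

@[simp] lemma mem_shiftDown {a y : ℕ} {S : Finset ℕ} :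
    y ∈ shiftDown a S ↔ y + (a + 1) ∈ S :=
  mem_preimage

lemma rangeUnionShift_shiftDown {S : Finset ℕ} {a : ℕ} (hS : firstGap S = a) :
    rangeUnionShift a (shiftDown a S) = S := by
  obtain ⟨ha, hlt⟩ := firstGap_eq_iff.1 hS
  ext x
  rw [mem_rangeUnionShift, mem_shiftDown]
  rcases lt_trichotomy x a with h | rfl | h
  · simp [h, hlt x h]
  · simp [ha]
  · simp [h, show x - (a + 1) + (a + 1) = x by omega, h.not_gt]

lemma shiftDown_rangeUnionShift (a : ℕ) (T : Finset ℕ) :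
    shiftDown a (rangeUnionShift a T) = T := by
  ext y
  simp [mem_rangeUnionShift, show a < y + (a + 1) by omega, show ¬ y + (a + 1) < a by omega]

lemma shiftDown_mem_sparseSets {m k a : ℕ} {S : Finset ℕ} (hS : S ∈ runClosedSets m k)
    (hgap : firstGap S = a) : shiftDown a S ∈ sparseSets (m - a - 1) (k - a) := by
  obtain ⟨⟨hSm, hSk⟩, hRC⟩ := mem_filter.1 hS |>.imp_left mem_powersetCard.1
  refine mem_sparseSets.2 ⟨fun y hy => ?_, ?_, fun y hy hy1 => ?_⟩
  · have := mem_range.1 (hSm (mem_shiftDown.1 hy))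
    exact mem_range.2 (by omega)
  · have := card_rangeUnionShift a (shiftDown a S)
    rw [rangeUnionShift_shiftDown hgap] at this
    omega
  · rw [mem_shiftDown] at hy hy1
    exact (firstGap_eq_iff.1 hgap).1 (hRC.range_subset hy (by simpa [add_right_comm] using hy1)
      (mem_range.2 (by omega)))

lemma rangeUnionShift_mem_runClosedSets {m k a : ℕ} {T : Finset ℕ} (hak : a ≤ k)
    (hkm : k ≤ m) (hT : T ∈ sparseSets (m - a - 1) (k - a)) :
    rangeUnionShift a T ∈ runClosedSets m k := by
  obtain ⟨hTm, hTk, hT⟩ := mem_sparseSets.1 hT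
  refine mem_filter.2 ⟨mem_powersetCard.2 ⟨fun x hx => ?_, ?_⟩, fun i hi hi2 => ?_⟩
  · rcases mem_rangeUnionShift.1 hx with h | ⟨h, hx⟩
    · exact mem_range.2 (by omega)
    · have := mem_range.1 (hTm hx)
      exact mem_range.2 (by omega)
  · rw [card_rangeUnionShift, hTk]
    omega
  · rw [mem_rangeUnionShift] at hi hi2 ⊢
    rcases hi with h | ⟨h, hi⟩
    · omega
    · rcases hi2 with h2 | ⟨-, hi2⟩
      · omega
      · exact absurd (by rwa [show i + 2 - (a + 1) = i + 1 - (a + 1) + 1 by omega] at hi2)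
          (hT _ hi)

lemma firstGap_rangeUnionShift (a : ℕ) (T : Finset ℕ) : firstGap (rangeUnionShift a T) = a :=
  firstGap_eq_iff.2
    ⟨by simp [mem_rangeUnionShift], fun _ hp => mem_rangeUnionShift.2 (Or.inl hp)⟩

lemma card_filter_firstGap_eq {m k a : ℕ} (hak : a ≤ k) (hkm : k ≤ m) :
    #((runClosedSets m k).filter (firstGap · = a)) = #(sparseSets (m - a - 1) (k - a)) := by
  refine card_nbij' (shiftDown a) (rangeUnionShift a) (fun S hS => ?_) (fun T hT => ?_)
    (fun S hS => rangeUnionShift_shiftDown (mem_filter.1 hS).2)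
    (fun T _ => shiftDown_rangeUnionShift a T)
  · obtain ⟨hS, hgap⟩ := mem_filter.1 hS
    exact shiftDown_mem_sparseSets hS hgap
  · exact mem_filter.2
      ⟨rangeUnionShift_mem_runClosedSets hak hkm hT, firstGap_rangeUnionShift a T⟩

lemma card_runClosedSets {m k : ℕ} (hkm : k ≤ m) :
    #(runClosedSets m k) = ∑ a ∈ range (k + 1), (m - k).choose (k - a) := by
  have hgap : ∀ S ∈ runClosedSets m k, firstGap S ∈ range (k + 1) := fun S hS => by
    have := (mem_powersetCard.1 (mem_filter.1 hS).1).2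
    exact mem_range.2 (by have := firstGap_le_card S; omega)
  rw [card_eq_sum_card_fiberwise hgap]
  refine sum_congr rfl fun a ha => ?_
  have ha : a ≤ k := Nat.lt_succ_iff.1 (mem_range.1 ha)
  rw [card_filter_firstGap_eq ha hkm, card_sparseSets]
  rcases Nat.lt_or_ge a m with h | h
  · rw [show m - a - 1 + 1 - (k - a) = m - k by omega]
  · simp [show k - a = 0 by omega]

lemma C_natCast (a b : ℕ) : _root_.C a b = a.choose b := by
  rw [_root_.C]
  split_ifs with h
  · simp
  · rw [Nat.choose_eq_zero_of_lt (by omega), Nat.cast_zero]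

lemma C_of_neg {a : ℤ} (ha : a < 0) (b : ℤ) : _root_.C a b = 0 :=
  if_neg fun h => by omega

lemma sum_C_of_lt {n k : ℕ} (hk : k < n) :
    ∑ ℓ ∈ Icc 1 n, _root_.C ((n : ℤ) - k - 1) ((k : ℤ) - ℓ + 1)
      = ∑ a ∈ range (k + 1), ((n - 1 - k).choose (k - a) : ℤ) := by
  rw [← Ico_add_one_right_eq_Icc, sum_Ico_eq_sum_range, Nat.add_sub_cancel]
  symm
  refine (sum_congr rfl fun a ha => ?_).trans
    (sum_subset (range_subset_range.2 hk) fun a _ ha => ?_)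
  · have : a ≤ k := Nat.lt_succ_iff.1 (mem_range.1 ha)
    rw [← C_natCast]
    congr 1 <;> push_cast <;> omega
  · have : k < a := by simpa using ha
    exact if_neg fun h => by push_cast at h; omega

lemma sum_C_of_le {n k : ℕ} (hk : n ≤ k) :
    ∑ ℓ ∈ Icc 1 n, _root_.C ((n : ℤ) - k - 1) ((k : ℤ) - ℓ + 1) = 0 :=
  sum_eq_zero fun _ _ => C_of_neg (by omega) _

section Perm

variable {n : ℕ} (π : Equiv.Perm (Fin n))

lemma card_filter_apply_lt (q : ℕ) : #{x | (π x : ℕ) < q} = min n q := by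
  rw [← Fin.card_filter_val_lt]
  exact card_equiv π (by simp)

lemma card_lt_add_card_gt (i : Fin n) :
    #{j | j < i ∧ π j < π i} + #{j | i < j ∧ π j < π i} = π i := by
  rw [← min_eq_right (π i).isLt.le, ← card_filter_apply_lt, ← card_union_of_disjoint]
  · congr 1
    ext j
    simp only [mem_union, mem_filter, mem_univ, true_and, Fin.lt_def]
    constructor
    · rintro (h | h) <;> exact h.2
    · intro h
      rcases lt_trichotomy j i with hji | rfl | hij
      · exact Or.inl ⟨hji, h⟩
      · exact absurd h (lt_irrefl _)
      · exact Or.inr ⟨hij, h⟩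
  · exact disjoint_filter.2 fun j _ h h' => lt_asymm h.1 h'.1

lemma exists_le_apply_le {q : ℕ} (hq : q < n) :
    ∃ j : Fin n, q ≤ j ∧ (π j : ℕ) ≤ q := by
  by_contra! h
  have := card_le_card (s := {x | (π x : ℕ) < q + 1}) (t := {x : Fin n | (x : ℕ) < q})
    fun x hx => by
      simp only [mem_filter, mem_univ, true_and] at hx ⊢
      by_contra! hx'
      have := h x hx'
      omega
  rw [card_filter_apply_lt, Fin.card_filter_val_lt] at this
  omega

def succSet : Finset ℕ := ({i | (π i : ℕ) = i + 1} : Finset (Fin n)).map Fin.valEmbedding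

lemma val_mem_succSet {i : Fin n} : (i : ℕ) ∈ succSet π ↔ (π i : ℕ) = i + 1 := by
  simp [succSet, Fin.val_inj]

lemma mem_succSet {m : ℕ} :
    m ∈ succSet π ↔ ∃ h : m < n, (π ⟨m, h⟩ : ℕ) = m + 1 := by
  constructor
  · intro hm
    obtain ⟨i, -, rfl⟩ := mem_map.1 hm
    exact ⟨i.isLt, (val_mem_succSet π).1 hm⟩
  · rintro ⟨h, hm⟩
    exact (val_mem_succSet π (i := ⟨m, h⟩)).2 hm

lemma succSet_subset_range : succSet π ⊆ range (n - 1) := fun m hm => by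
  obtain ⟨h, hm⟩ := (mem_succSet π).1 hm
  have := (π ⟨m, h⟩).isLt
  exact mem_range.2 (by omega)

def SuccBounded : Prop := ∀ i, (π i : ℕ) ≤ i + 1

namespace SuccBounded

variable {π} (hπ : SuccBounded π)
include hπ

lemma image_filter_lt {q : ℕ} {j : Fin n} (hjq : q ≤ j) (hj : (π j : ℕ) ≤ q) :
    ({x | (x : ℕ) < q} : Finset (Fin n)).image π
      = ({x | (x : ℕ) < q + 1} : Finset (Fin n)).erase (π j) := by
  refine eq_of_subset_of_card_le (fun v hv => ?_) ?_
  · obtain ⟨x, hx, rfl⟩ := mem_image.1 hv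
    simp only [mem_filter, mem_univ, true_and] at hx
    refine mem_erase.2 ⟨fun h => absurd (π.injective h ▸ hx) (by omega), ?_⟩
    have := hπ x
    exact mem_filter.2 ⟨mem_univ _, by omega⟩
  · rw [card_image_of_injective _ π.injective,
      card_erase_of_mem (by simpa using Nat.lt_succ_of_le hj),
      Fin.card_filter_val_lt, Fin.card_filter_val_lt]
    omega

lemma apply_eq_succ_of_le_of_lt {i j p : Fin n} (h : π j < π i)
    (hip : i ≤ p) (hpj : p < j) : (π p : ℕ) = p + 1 := by
  have hji : (π j : ℕ) ≤ i := by have := hπ i; rw [Fin.lt_def] at h; omega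
  have hpn : (p : ℕ) + 1 < n := by have := j.isLt; rw [Fin.lt_def] at hpj; omega
  have hmem :
      (⟨p + 1, hpn⟩ : Fin n) ∈ ({x | (x : ℕ) < p + 1 + 1} : Finset (Fin n)).erase (π j) := by
    refine mem_erase.2 ⟨fun he => ?_, by simp⟩
    rw [Fin.le_def] at hip
    have := congrArg Fin.val he
    simp only at this
    omega
  rw [← hπ.image_filter_lt (Fin.lt_def.1 hpj) (by rw [Fin.le_def] at hip; omega)] at hmem
  obtain ⟨x, hx, hxp⟩ := mem_image.1 hmem
  have hx : (x : ℕ) < p + 1 := by simpa using hx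
  have hxv : (π x : ℕ) = p + 1 := by rw [hxp]
  obtain rfl : x = p := Fin.ext (by have := hπ x; omega)
  exact hxv

lemma card_inversions_from (i : Fin n) :
    #{j | i < j ∧ π j < π i} = if (π i : ℕ) = i + 1 then 1 else 0 := by
  split_ifs with hi
  · have hlt :
        ({j | j < i ∧ π j < π i} : Finset (Fin n)) = ({j | (j : ℕ) < i} : Finset (Fin n)) := by
      ext j
      simp only [mem_filter, mem_univ, true_and, Fin.lt_def, and_iff_left_iff_imp]
      intro hj
      have := hπ j
      omega
    have := card_lt_add_card_gt π i
    rw [hlt, Fin.card_filter_val_lt, hi, min_eq_right i.isLt.le] at this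
    omega
  · refine card_eq_zero.2 (filter_eq_empty_iff.2 fun j _ hj => hi ?_)
    exact hπ.apply_eq_succ_of_le_of_lt hj.2 le_rfl hj.1

lemma invNum_eq_card_succSet : invNum π = #(succSet π) := by
  rw [invNum, card_filter, Fintype.sum_prod_type, succSet, card_map, card_filter]
  refine sum_congr rfl fun i _ => ?_
  rw [← hπ.card_inversions_from i, card_filter]

lemma apply_le_of_eqOn_lt {σ : Equiv.Perm (Fin n)} {i : Fin n} (hi : (π i : ℕ) ≠ i + 1)
    (hσ : ∀ x < i, σ x = π x) : π i ≤ σ i := by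
  by_contra! h
  obtain ⟨x, hπx⟩ := π.surjective (σ i)
  rcases lt_trichotomy x i with hxi | rfl | hix
  · exact hxi.ne (σ.injective ((hσ x hxi).trans hπx))
  · exact h.ne hπx.symm
  · rw [← hπx] at h
    exact hi (hπ.apply_eq_succ_of_le_of_lt h le_rfl hix)

lemma eq_of_succSet_eq {σ : Equiv.Perm (Fin n)} (hσ : SuccBounded σ)
    (h : succSet π = succSet σ) : π = σ := by
  refine Equiv.ext fun i => ?_
  induction i using WellFoundedLT.induction with
  | _ i ih =>
  have hiff : (π i : ℕ) = i + 1 ↔ (σ i : ℕ) = i + 1 := by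
    rw [← val_mem_succSet, ← val_mem_succSet, h]
  by_cases hi : (π i : ℕ) = i + 1
  · exact Fin.ext (hi.trans (hiff.1 hi).symm)
  · exact le_antisymm (hπ.apply_le_of_eqOn_lt hi fun x hx => (ih x hx).symm)
      (hσ.apply_le_of_eqOn_lt (hiff.not.1 hi) ih)

end SuccBounded

end Perm

section Runs

variable (S : Finset ℕ)

def runStart : ℕ → ℕ
  | 0 => 0
  | i + 1 => if i ∈ S then runStart i else i + 1

lemma runStart_le : ∀ i, runStart S i ≤ i
  | 0 => le_rfl
  | i + 1 => by
    rw [runStart]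
    split_ifs
    · exact (runStart_le i).trans i.le_succ
    · exact le_rfl

lemma mem_of_runStart_le : ∀ {i p : ℕ}, runStart S i ≤ p → p < i → p ∈ S
  | 0, p, _, hp => absurd hp (Nat.not_lt_zero p)
  | i + 1, p, hs, hp => by
    rw [runStart] at hs
    split_ifs at hs with hi
    · rcases Nat.lt_succ_iff_lt_or_eq.1 hp with hp | rfl
      · exact mem_of_runStart_le hs hp
      · exact hi
    · omega

lemma runStart_eq_zero_or_pred_notMem : ∀ i, runStart S i = 0 ∨ runStart S i - 1 ∉ S
  | 0 => Or.inl rfl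
  | i + 1 => by
    rw [runStart]
    split_ifs with hi
    · exact runStart_eq_zero_or_pred_notMem i
    · exact Or.inr hi

-- the cycle `s ↦ s + 1 ↦ ⋯ ↦ i ↦ s` on each maximal run `[s, i)` of `S`, identity elsewhere
def runMap (i : ℕ) : ℕ := if i ∈ S then i + 1 else runStart S i

lemma runMap_le_succ (i : ℕ) : runMap S i ≤ i + 1 := by
  unfold runMap
  split_ifs
  · exact le_rfl
  · exact (runStart_le S i).trans (Nat.le_succ _)

lemma runMap_eq_succ_iff {i : ℕ} : runMap S i = i + 1 ↔ i ∈ S := by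
  unfold runMap
  split_ifs with h
  · exact iff_of_true rfl h
  · exact iff_of_false (by have := runStart_le S i; omega) h

lemma runMap_injective : Function.Injective (runMap S) := by
  refine .of_lt_imp_ne fun i j hij he => ?_
  have hi' := runStart_le S i
  unfold runMap at he
  split_ifs at he with hi hj hj
  · omega
  · rcases runStart_eq_zero_or_pred_notMem S j with h | h
    · omega
    · exact h (by rwa [← he, Nat.add_sub_cancel])
  · omega
  · exact hi (mem_of_runStart_le S (he ▸ hi') hij)

lemma exists_succBounded_succSet_eq {n : ℕ} (hS : S ⊆ range (n - 1)) :
    ∃ π : Equiv.Perm (Fin n), SuccBounded π ∧ succSet π = S := by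
  have hlt : ∀ i : Fin n, runMap S i < n := fun i => by
    unfold runMap
    split_ifs with h
    · have := mem_range.1 (hS h); omega
    · exact (runStart_le S i).trans_lt i.isLt
  have hinj : Function.Injective fun i : Fin n => (⟨runMap S i, hlt i⟩ : Fin n) :=
    fun i j h => Fin.ext (runMap_injective S (congrArg Fin.val h))
  refine ⟨Equiv.ofBijective _ hinj.bijective_of_finite, fun i => ?_, ?_⟩
  · exact runMap_le_succ S i
  · ext m
    rw [mem_succSet]
    refine ⟨fun ⟨_, h⟩ => (runMap_eq_succ_iff S).1 h, fun h => ?_⟩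
    have := mem_range.1 (hS h)
    exact ⟨by omega, (runMap_eq_succ_iff S).2 h⟩

end Runs

section Patterns

variable {n : ℕ} {π : Equiv.Perm (Fin n)}

lemma containsPat_of_lt {p : List ℕ} (hp : p.Nodup) (f : Fin p.length → Fin n)
    (hf : StrictMono f) (h : ∀ i j, p.get i < p.get j → π (f i) < π (f j)) :
    ContainsPat π p := by
  refine ⟨f, hf, fun i j => ⟨h i j, fun hij => ?_⟩⟩
  by_contra hji
  rcases (not_lt.1 hji).lt_or_eq with hlt | heq
  · exact lt_asymm hij (h j i hlt)
  · rw [(List.nodup_iff_injective_get.1 hp) heq] at hij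
    exact lt_irrefl _ hij

lemma containsPat_312_or_321 {a b c : Fin n} (hab : a < b) (hbc : b < c) (hb : π b < π a)
    (hc : π c < π a) : ContainsPat π [3, 1, 2] ∨ ContainsPat π [3, 2, 1] := by
  have hf : StrictMono ![a, b, c] :=
    ((Subsingleton.strictMono (α := Fin 1) _).vecCons hbc).vecCons hab
  rcases lt_or_gt_of_ne (π.injective.ne hbc.ne) with h | h
  · refine Or.inl (containsPat_of_lt (by decide) _ hf fun i j => ?_)
    fin_cases i <;> fin_cases j <;> simp [*]
  · refine Or.inr (containsPat_of_lt (by decide) _ hf fun i j => ?_)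
    fin_cases i <;> fin_cases j <;> simp [*]

lemma containsPat_1342 {a b c d : Fin n} (hab : a < b) (hbc : b < c) (hcd : c < d)
    (had : π a < π d) (hdb : π d < π b) (hbc' : π b < π c) : ContainsPat π [1, 3, 4, 2] := by
  have hf : StrictMono ![a, b, c, d] :=
    (((Subsingleton.strictMono (α := Fin 1) _).vecCons hcd).vecCons hbc).vecCons hab
  have hab' := had.trans hdb
  have hac' := hab'.trans hbc'
  have hdc' := hdb.trans hbc'
  refine containsPat_of_lt (by decide) _ hf fun i j => ?_
  fin_cases i <;> fin_cases j <;> simp [*]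

lemma ContainsPat.exists_triple {x y z : ℕ} (h : ContainsPat π [x, y, z]) (hy : y < x)
    (hz : z < x) : ∃ a b c, a < b ∧ b < c ∧ π b < π a ∧ π c < π a := by
  obtain ⟨f, hf, hiff⟩ := h
  exact ⟨f 0, f 1, f 2, hf (show (0 : Fin 3) < 1 by decide), hf (show (1 : Fin 3) < 2 by decide),
    (hiff 1 0).1 hy, (hiff 2 0).1 hz⟩

lemma ContainsPat.exists_1342 (h : ContainsPat π [1, 3, 4, 2]) :
    ∃ a b c d, a < b ∧ b < c ∧ c < d ∧ π a < π d ∧ π d < π b := by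
  obtain ⟨f, hf, hiff⟩ := h
  exact ⟨f 0, f 1, f 2, f 3, hf (by decide), hf (by decide), hf (by decide),
    (hiff 0 3).1 (by decide), (hiff 3 1).1 (by decide)⟩

end Patterns

section Characterization

variable {n : ℕ} {π : Equiv.Perm (Fin n)}

lemma SuccBounded.not_containsPat_three (hπ : SuccBounded π) {x y z : ℕ} (hy : y < x)
    (hz : z < x) : ¬ContainsPat π [x, y, z] := fun h => by
  obtain ⟨a, b, c, hab, hbc, hb, hc⟩ := h.exists_triple hy hz
  have := hπ.apply_eq_succ_of_le_of_lt hc hab.le hbc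
  have := hπ a
  rw [Fin.lt_def] at hab hb
  omega

theorem succBounded_iff_avoids :
    SuccBounded π ↔ ¬ContainsPat π [3, 1, 2] ∧ ¬ContainsPat π [3, 2, 1] := by
  refine ⟨fun hπ => ⟨hπ.not_containsPat_three (by decide) (by decide),
    hπ.not_containsPat_three (by decide) (by decide)⟩, fun ⟨h312, h321⟩ i => ?_⟩
  by_contra! hi
  have hbefore : #{j | j < i ∧ π j < π i} ≤ i := by
    calc #{j | j < i ∧ π j < π i} ≤ #({j | (j : ℕ) < i} : Finset (Fin n)) :=
          card_le_card fun j hj => by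
            simp only [mem_filter, mem_univ, true_and] at hj ⊢
            exact hj.1
      _ = i := by rw [Fin.card_filter_val_lt, min_eq_right i.isLt.le]
  have := card_lt_add_card_gt π i
  obtain ⟨j, hj, k, hk, hjk⟩ := one_lt_card.1 (by omega : 1 < #{j | i < j ∧ π j < π i})
  simp only [mem_filter, mem_univ, true_and] at hj hk
  have key : ∀ j k : Fin n, i < j → j < k → π j < π i → π k < π i → False :=
    fun j k hij hjk hj hk =>
    (containsPat_312_or_321 hij hjk hj hk).elim h312 h321
  rcases lt_or_gt_of_ne hjk with h | h
  · exact key j k hj.1 h hj.2 hk.2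
  · exact key k j hk.1 h hk.2 hj.2

lemma SuccBounded.not_containsPat_1342 (hπ : SuccBounded π) (hRC : RunClosed (succSet π)) :
    ¬ContainsPat π [1, 3, 4, 2] := by
  intro h
  obtain ⟨a, b, c, d, hab, hbc, hcd, had, hdb⟩ := h.exists_1342
  rw [Fin.lt_def] at hab hbc hcd had hdb
  have hπb := hπ.apply_eq_succ_of_le_of_lt hdb le_rfl (hbc.trans hcd)
  have hb1 : (b : ℕ) + 1 ∈ succSet π := (mem_succSet π).2 ⟨by omega,
    hπ.apply_eq_succ_of_le_of_lt (p := ⟨b + 1, by omega⟩) hdb (Fin.le_def.2 (by simp))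
      (Fin.lt_def.2 (by simp only; omega))⟩
  -- the positions `0, …, b + 1` take the values `1, …, b + 2`, including `π d ∈ [1, b]`
  obtain ⟨hv, hvd⟩ := (mem_succSet π).1 (hRC.range_subset ((val_mem_succSet π).2 hπb) hb1
    (mem_range.2 (show (π d : ℕ) - 1 < b + 2 by omega)))
  have hvd : (⟨(π d : ℕ) - 1, hv⟩ : Fin n) = d :=
    π.injective (Fin.ext (by rw [hvd]; omega))
  have := congrArg Fin.val hvd
  simp only at this
  omega

lemma SuccBounded.runClosed_succSet (hπ : SuccBounded π) (h1342 : ¬ContainsPat π [1, 3, 4, 2]) :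
    RunClosed (succSet π) := by
  intro i hi1 hi2
  by_contra hi
  obtain ⟨hin, hπi1⟩ := (mem_succSet π).1 hi1
  obtain ⟨hin2, hπi2⟩ := (mem_succSet π).1 hi2
  obtain ⟨j, hij, hj⟩ := exists_le_apply_le π (q := i + 1) (by omega)
  have hmem : ∀ v : Fin n, (v : ℕ) ≤ i + 1 → v ≠ π j → ∃ x : Fin n, (x : ℕ) ≤ i ∧ π x = v :=
    fun v hv hvj => by
      obtain ⟨x, hx, hxv⟩ := mem_image.1 (hπ.image_filter_lt hij hj ▸
        mem_erase.2 ⟨hvj, mem_filter.2 ⟨mem_univ _, by omega⟩⟩)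
      exact ⟨x, Nat.lt_succ_iff.1 (mem_filter.1 hx).2, hxv⟩
  by_cases hj0 : (π j : ℕ) = 0
  · obtain ⟨x, hxi, hx⟩ := hmem ⟨i + 1, by omega⟩ le_rfl fun h => by simp [← h] at hj0
    have hxv : (π x : ℕ) = i + 1 := by rw [hx]
    have hxi : (x : ℕ) = i := by have := hπ x; omega
    exact hi (hxi ▸ (val_mem_succSet π).2 (by omega))
  · obtain ⟨a, hai, ha⟩ := hmem ⟨0, by omega⟩ (Nat.zero_le _) fun h => hj0 (by rw [← h])
    have hja : (j : ℕ) ≠ i + 1 := fun h => by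
      rw [show j = ⟨i + 1, hin⟩ from Fin.ext h] at hj
      omega
    have hjb : (j : ℕ) ≠ i + 2 := fun h => by
      rw [show j = ⟨i + 2, hin2⟩ from Fin.ext h] at hj
      omega
    refine h1342 (containsPat_1342 (a := a) (b := ⟨i + 1, hin⟩) (c := ⟨i + 2, hin2⟩) (d := j)
      ?_ ?_ ?_ ?_ ?_ ?_) <;> simp only [Fin.lt_def, ha] <;> omega

end Characterization

theorem avoids_iff {n : ℕ} {π : Equiv.Perm (Fin n)} :
    AvoidsAll π [[3, 1, 2], [3, 2, 1], [1, 3, 4, 2]] ↔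
      SuccBounded π ∧ RunClosed (succSet π) := by
  simp only [AvoidsAll, List.mem_cons, List.not_mem_nil, or_false, forall_eq_or_imp, forall_eq]
  constructor
  · rintro ⟨h312, h321, h1342⟩
    have hπ := succBounded_iff_avoids.2 ⟨h312, h321⟩
    exact ⟨hπ, hπ.runClosed_succSet h1342⟩
  · rintro ⟨hπ, hRC⟩
    exact ⟨(succBounded_iff_avoids.1 hπ).1, (succBounded_iff_avoids.1 hπ).2,
      hπ.not_containsPat_1342 hRC⟩

theorem card_avoiders_invNum_eq (n k : ℕ) :
    #{π : Equiv.Perm (Fin n) | AvoidsAll π [[3, 1, 2], [3, 2, 1], [1, 3, 4, 2]] ∧ invNum π = k}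
      = #(runClosedSets (n - 1) k) := by
  refine card_bij (fun π _ => succSet π) (fun π hπ => ?_) (fun π hπ σ hσ h => ?_)
    fun S hS => ?_
  · obtain ⟨hav, hinv⟩ := (mem_filter.1 hπ).2
    obtain ⟨hπ, hRC⟩ := avoids_iff.1 hav
    exact mem_filter.2 ⟨mem_powersetCard.2 ⟨succSet_subset_range π,
      hπ.invNum_eq_card_succSet ▸ hinv⟩, hRC⟩
  · exact (avoids_iff.1 (mem_filter.1 hπ).2.1).1.eq_of_succSet_eq
      (avoids_iff.1 (mem_filter.1 hσ).2.1).1 h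
  · obtain ⟨⟨hSn, hSk⟩, hRC⟩ := mem_filter.1 hS |>.imp_left mem_powersetCard.1
    obtain ⟨π, hπ, rfl⟩ := exists_succBounded_succSet_eq S hSn
    exact ⟨π, mem_filter.2 ⟨mem_univ _, avoids_iff.2 ⟨hπ, hRC⟩,
      hπ.invNum_eq_card_succSet.trans hSk⟩, rfl⟩

theorem stmt12 (n k : ℕ) (hn : 1 ≤ n) :
    ({π : Equiv.Perm (Fin n) | AvoidsAll π [[3,1,2],[3,2,1],[1,3,4,2]] ∧ invNum π = k}.ncard : ℤ) =
      ∑ ℓ ∈ Finset.Icc 1 n, C ((n : ℤ) - k - 1) ((k : ℤ) - ℓ + 1) := by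
  rw [Set.ncard_eq_toFinset_card', Set.toFinset_ofPred, card_avoiders_invNum_eq]
  rcases lt_or_ge k n with hk | hk
  · rw [card_runClosedSets (by omega), sum_C_of_lt hk, Nat.cast_sum]
  · rw [sum_C_of_le hk, runClosedSets, powersetCard_eq_empty.2 (by rw [card_range]; omega),
      filter_empty, card_empty, Nat.cast_zero]
end
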